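/- arXiv:2105.06871 — 14 statements merged into one kernel-verified Lean document; each statement's English description precedes it below -/
import Mathlib

section
/- For all natural numbers l, m, l₁, m₁, i, j, i₁, j₁: if ((1/6 + i)·2^{-l} + j)·3^{-m} = ((1/6 + i₁)·2^{-l₁} + j₁)·3^{-m₁} in ℚ, then l = l₁ and m = m₁. Consequently, for distinct pairs (l,m) ≠ (l₁,m₁) the sets S(l,m) and S(l₁,m₁) are disjoint. -/
/-!
Writing the point as `(1 + 6(i + j·2^l)) / (2^(l+1) · 3^(m+1))`, the numerator is prime to `6`,
so the `2`-adic and `3`-adic valuations of the point are `-(l+1)` and `-(m+1)`: the point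
determines `l` and `m`.
-/

/-- The support set of `D₂^l D₃^m e_{1/6}`:
`S(l,m) = {((1/6 + i)·2^{-l} + j)·3^{-m} : i < 2^l, j < 3^m}`. -/
def lorSupportSet (l m : ℕ) : Set ℚ :=
  {x | ∃ i j : ℕ, i < 2 ^ l ∧ j < 3 ^ m ∧
    x = ((1 / 6 + (i : ℚ)) * (2 : ℚ) ^ (-(l : ℤ)) + (j : ℚ)) * (3 : ℚ) ^ (-(m : ℤ))}

theorem padicValRat_natCast_div_pow_mul_pow {p q n : ℕ} [Fact p.Prime] (hq : ¬p ∣ q)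
    (hn : ¬p ∣ n) (a b : ℕ) :
    padicValRat p (n / (p ^ a * q ^ b)) = -a := by
  have hn₀ : n ≠ 0 := by rintro rfl; exact hn (dvd_zero p)
  have hq₀ : q ≠ 0 := by rintro rfl; exact hq (dvd_zero p)
  have hp₀ : p ≠ 0 := (Fact.out : p.Prime).ne_zero
  rw [padicValRat.div (by exact_mod_cast hn₀) (by positivity),
    padicValRat.mul (by positivity) (by positivity), padicValRat.pow, padicValRat.pow,
    padicValRat.self (Fact.out : p.Prime).one_lt,
    padicValRat.of_nat, padicValRat.of_nat, padicValNat.eq_zero_of_not_dvd hn,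
    padicValNat.eq_zero_of_not_dvd hq]
  simp

theorem lor_point_eq_div (l m i j : ℕ) :
    ((1 / 6 + (i : ℚ)) * (2 : ℚ) ^ (-(l : ℤ)) + (j : ℚ)) * (3 : ℚ) ^ (-(m : ℤ)) =
      ((1 + 6 * (i + j * 2 ^ l) : ℕ) : ℚ) / (2 ^ (l + 1) * 3 ^ (m + 1)) := by
  rw [zpow_neg, zpow_neg, zpow_natCast, zpow_natCast]
  push_cast
  field_simp
  ring

theorem padicValRat_lor_point (l m i j : ℕ) :
    padicValRat 2 (((1 / 6 + (i : ℚ)) * (2 : ℚ) ^ (-(l : ℤ)) + (j : ℚ)) * (3 : ℚ) ^ (-(m : ℤ)))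
        = -(l + 1 : ℕ) ∧
      padicValRat 3 (((1 / 6 + (i : ℚ)) * (2 : ℚ) ^ (-(l : ℤ)) + (j : ℚ)) * (3 : ℚ) ^ (-(m : ℤ)))
        = -(m + 1 : ℕ) := by
  have : Fact (Nat.Prime 3) := ⟨Nat.prime_three⟩
  have h₂ := padicValRat_natCast_div_pow_mul_pow (p := 2) (q := 3)
    (n := 1 + 6 * (i + j * 2 ^ l)) (by norm_num) (by omega) (l + 1) (m + 1)
  have h₃ := padicValRat_natCast_div_pow_mul_pow (p := 3) (q := 2)
    (n := 1 + 6 * (i + j * 2 ^ l)) (by norm_num) (by omega) (m + 1) (l + 1)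
  rw [Nat.cast_ofNat, Nat.cast_ofNat] at h₂ h₃
  rw [lor_point_eq_div]
  exact ⟨h₂, mul_comm (2 ^ (l + 1) : ℚ) _ ▸ h₃⟩

theorem levels_eq_of_lor_point_eq {l m l₁ m₁ i j i₁ j₁ : ℕ}
    (h : ((1 / 6 + (i : ℚ)) * (2 : ℚ) ^ (-(l : ℤ)) + (j : ℚ)) * (3 : ℚ) ^ (-(m : ℤ)) =
        ((1 / 6 + (i₁ : ℚ)) * (2 : ℚ) ^ (-(l₁ : ℤ)) + (j₁ : ℚ)) * (3 : ℚ) ^ (-(m₁ : ℤ))) :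
    l = l₁ ∧ m = m₁ := by
  obtain ⟨h₂, h₃⟩ := padicValRat_lor_point l m i j
  obtain ⟨h₂', h₃'⟩ := padicValRat_lor_point l₁ m₁ i₁ j₁
  rw [h, h₂'] at h₂
  rw [h, h₃'] at h₃
  omega

theorem stmt1 :
    (∀ l m l₁ m₁ i j i₁ j₁ : ℕ,
      ((1 / 6 + (i : ℚ)) * (2 : ℚ) ^ (-(l : ℤ)) + (j : ℚ)) * (3 : ℚ) ^ (-(m : ℤ)) =
        ((1 / 6 + (i₁ : ℚ)) * (2 : ℚ) ^ (-(l₁ : ℤ)) + (j₁ : ℚ)) * (3 : ℚ) ^ (-(m₁ : ℤ)) →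
      l = l₁ ∧ m = m₁) ∧
    (∀ l m l₁ m₁ : ℕ, (l, m) ≠ (l₁, m₁) →
      Disjoint (lorSupportSet l m) (lorSupportSet l₁ m₁)) := by
  refine ⟨fun _ _ _ _ _ _ _ _ h => levels_eq_of_lor_point_eq h, ?_⟩
  intro l m l₁ m₁ hne
  rw [Set.disjoint_left]
  rintro x ⟨i, j, -, -, rfl⟩ ⟨i₁, j₁, -, -, hx⟩
  obtain ⟨rfl, rfl⟩ := levels_eq_of_lor_point_eq hx
  exact hne rfl
end

section
/- With u_n as defined in the context, the sum over all rationals x of |u_n(x)|^p equals 1; that is, u_n is a unit vector of ℓ^p(ℚ). -/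
/-- `u_n(x) = n^{-2/p} Σ_{j=1}^n Σ_{k=1}^n 2^{-j/p} 3^{-k/p} 1_{S(j,k)}(x)`. -/
noncomputable def krivineVec (p : ℝ) (n : ℕ) (x : ℚ) : ℝ :=
  (n : ℝ) ^ (-(2 / p)) *
    ∑ j ∈ Finset.Icc 1 n, ∑ k ∈ Finset.Icc 1 n,
      (2 : ℝ) ^ (-(j : ℝ) / p) * (3 : ℝ) ^ (-(k : ℝ) / p) *
        (lorSupportSet j k).indicator (fun _ => (1 : ℝ)) x

open Finset

section Indicator

variable {ι α : Type*} {s : Finset ι}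

lemma sum_mul_indicator_one_of_mem {R : Type*} [NonAssocSemiring R] {S : ι → Set α}
    (hS : (s : Set ι).PairwiseDisjoint S) (f : ι → R) {i : ι} (hi : i ∈ s) {x : α} (hx : x ∈ S i) :
    ∑ j ∈ s, f j * (S j).indicator (fun _ => (1 : R)) x = f i := by
  rw [sum_eq_single_of_mem i hi, Set.indicator_of_mem hx, mul_one]
  intro j hj hji
  rw [Set.indicator_of_notMem (Set.disjoint_left.1 (hS hi hj hji.symm) hx), mul_zero]

lemma abs_sum_mul_indicator_one_rpow {S : ι → Set α} (hS : (s : Set ι).PairwiseDisjoint S)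
    {c : ι → ℝ} (hc : ∀ i ∈ s, 0 ≤ c i) {p : ℝ} (hp : p ≠ 0) (x : α) :
    |∑ i ∈ s, c i * (S i).indicator (fun _ => (1 : ℝ)) x| ^ p
      = ∑ i ∈ s, c i ^ p * (S i).indicator (fun _ => (1 : ℝ)) x := by
  by_cases hx : ∃ i ∈ s, x ∈ S i
  · obtain ⟨i, hi, hxi⟩ := hx
    rw [sum_mul_indicator_one_of_mem hS c hi hxi, sum_mul_indicator_one_of_mem hS _ hi hxi,
      abs_of_nonneg (hc i hi)]
  · push Not at hx
    have hzero (f : ι → ℝ) : ∑ i ∈ s, f i * (S i).indicator (fun _ => (1 : ℝ)) x = 0 :=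
      sum_eq_zero fun i hi => by rw [Set.indicator_of_notMem (hx i hi), mul_zero]
    rw [hzero, hzero, abs_zero, Real.zero_rpow hp]

lemma tsum_sum_mul_indicator_one (F : ι → Finset α) (d : ι → ℝ) :
    ∑' x, ∑ i ∈ s, d i * (F i : Set α).indicator (fun _ => (1 : ℝ)) x
      = ∑ i ∈ s, d i * (F i).card := by
  rw [Summable.tsum_finsetSum fun i _ => summable_of_ne_finset_zero (s := F i) fun x hx => by
    rw [Set.indicator_of_notMem (by simpa using hx), mul_zero]]
  refine sum_congr rfl fun i _ => ?_
  rw [tsum_mul_left, ← sum_eq_tsum_indicator, sum_const, nsmul_one]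

end Indicator

lemma pow_two_mul_pow_three_inj {a b c d : ℕ} (h : 2 ^ a * 3 ^ b = 2 ^ c * 3 ^ d) :
    a = c ∧ b = d := by
  have h2 := congrArg (fun N => N.factorization 2) h
  have h3 := congrArg (fun N => N.factorization 3) h
  simp only [Nat.factorization_mul (pow_ne_zero _ two_ne_zero) (pow_ne_zero _ three_ne_zero),
    Nat.Prime.factorization_pow Nat.prime_two, Nat.Prime.factorization_pow Nat.prime_three,
    Finsupp.add_apply, Finsupp.single_apply] at h2 h3
  norm_num at h2 h3
  exact ⟨h2, h3⟩

lemma coprime_one_add_six_mul (k a b : ℕ) : Nat.Coprime (1 + 6 * k) (2 ^ a * 3 ^ b) := by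
  refine Nat.Coprime.mul_right (Nat.Coprime.pow_right _ ?_) (Nat.Coprime.pow_right _ ?_) <;>
    refine Nat.Coprime.symm ((Nat.Prime.coprime_iff_not_dvd (by norm_num)).2 ?_) <;> omega

def lorPoint (l m i j : ℕ) : ℚ :=
  ((1 / 6 + (i : ℚ)) * (2 : ℚ) ^ (-(l : ℤ)) + (j : ℚ)) * (3 : ℚ) ^ (-(m : ℤ))

lemma lorPoint_eq_div (l m i j : ℕ) :
    lorPoint l m i j
      = (((1 + 6 * (i + 2 ^ l * j) : ℕ) : ℤ) : ℚ) / (((2 ^ (l + 1) * 3 ^ (m + 1) : ℕ) : ℤ) : ℚ) := by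
  simp only [lorPoint, zpow_neg, zpow_natCast, Int.cast_natCast]
  push_cast
  field_simp
  ring

lemma eq_of_lorPoint_eq {l m i j l' m' i' j' : ℕ} (hi : i < 2 ^ l) (hi' : i' < 2 ^ l')
    (h : lorPoint l m i j = lorPoint l' m' i' j') : l = l' ∧ m = m' ∧ i = i' ∧ j = j' := by
  rw [lorPoint_eq_div, lorPoint_eq_div] at h
  obtain ⟨hnum, hden⟩ := Rat.div_int_inj (by positivity) (by positivity)
    (by simpa only [Int.natAbs_natCast] using coprime_one_add_six_mul _ _ _)
    (by simpa only [Int.natAbs_natCast] using coprime_one_add_six_mul _ _ _) h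
  obtain ⟨hl, hm⟩ := pow_two_mul_pow_three_inj (by exact_mod_cast hden)
  obtain rfl : l = l' := by omega
  obtain rfl : m = m' := by omega
  have hsum : i + 2 ^ l * j = i' + 2 ^ l * j' := by omega
  obtain ⟨hj, hi⟩ := (Nat.div_mod_unique (Nat.two_pow_pos l)).2 ⟨rfl, hi⟩
  obtain ⟨hj', hi'⟩ := (Nat.div_mod_unique (Nat.two_pow_pos l)).2 ⟨hsum.symm, hi'⟩
  exact ⟨rfl, rfl, hi.symm.trans hi', hj.symm.trans hj'⟩

lemma pairwiseDisjoint_lorSupportSet (s : Set (ℕ × ℕ)) :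
    s.PairwiseDisjoint fun q => lorSupportSet q.1 q.2 := by
  rintro ⟨l, m⟩ - ⟨l', m'⟩ - hne
  refine Set.disjoint_left.2 ?_
  rintro - ⟨i, j, hi, -, rfl⟩ ⟨i', j', hi', -, h⟩
  obtain ⟨rfl, rfl, -⟩ := eq_of_lorPoint_eq hi hi' h
  exact hne rfl

noncomputable def lorFinset (l m : ℕ) : Finset ℚ :=
  (range (2 ^ l) ×ˢ range (3 ^ m)).image fun q => lorPoint l m q.1 q.2

lemma coe_lorFinset (l m : ℕ) : (lorFinset l m : Set ℚ) = lorSupportSet l m := by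
  ext x
  simp only [lorFinset, coe_image, coe_product, coe_range, Set.mem_image, Set.mem_prod,
    Set.mem_Iio, Prod.exists, lorSupportSet, Set.mem_ofPred_eq]
  constructor
  · rintro ⟨i, j, ⟨hi, hj⟩, rfl⟩
    exact ⟨i, j, hi, hj, rfl⟩
  · rintro ⟨i, j, hi, hj, rfl⟩
    exact ⟨i, j, ⟨hi, hj⟩, rfl⟩

lemma card_lorFinset (l m : ℕ) : (lorFinset l m).card = 2 ^ l * 3 ^ m := by
  rw [lorFinset, card_image_of_injOn, card_product, card_range, card_range]
  rintro ⟨i, j⟩ hij ⟨i', j'⟩ hij' h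
  simp only [coe_product, coe_range, Set.mem_prod, Set.mem_Iio] at hij hij'
  obtain ⟨-, -, rfl, rfl⟩ := eq_of_lorPoint_eq hij.1 hij'.1 h
  rfl

noncomputable def krivineCoeff (p : ℝ) (n : ℕ) (q : ℕ × ℕ) : ℝ :=
  (n : ℝ) ^ (-(2 / p)) * ((2 : ℝ) ^ (-(q.1 : ℝ) / p) * (3 : ℝ) ^ (-(q.2 : ℝ) / p))

lemma krivineCoeff_nonneg (p : ℝ) (n : ℕ) (q : ℕ × ℕ) : 0 ≤ krivineCoeff p n q := by
  unfold krivineCoeff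
  positivity

lemma krivineCoeff_rpow_mul {p : ℝ} (hp : p ≠ 0) (n : ℕ) (q : ℕ × ℕ) :
    krivineCoeff p n q ^ p * (2 ^ q.1 * 3 ^ q.2 : ℕ) = ((n : ℝ) ^ 2)⁻¹ := by
  have rpow_div_rpow {x : ℝ} (hx : 0 ≤ x) (a : ℝ) : (x ^ (-a / p)) ^ p = (x ^ a)⁻¹ := by
    rw [← Real.rpow_mul hx, div_mul_cancel₀ _ hp, Real.rpow_neg hx]
  rw [krivineCoeff, Real.mul_rpow (by positivity) (by positivity),
    Real.mul_rpow (by positivity) (by positivity), neg_div', rpow_div_rpow (Nat.cast_nonneg n),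
    rpow_div_rpow zero_le_two, rpow_div_rpow zero_le_three, Real.rpow_two]
  push_cast
  simp only [Real.rpow_natCast]
  field_simp

lemma krivineVec_eq_sum (p : ℝ) (n : ℕ) (x : ℚ) :
    krivineVec p n x = ∑ q ∈ Icc 1 n ×ˢ Icc 1 n,
      krivineCoeff p n q * (lorSupportSet q.1 q.2).indicator (fun _ => (1 : ℝ)) x := by
  rw [krivineVec, sum_product, mul_sum]
  simp only [mul_sum, krivineCoeff, mul_assoc]

theorem stmt2 (p : ℝ) (hp : 1 ≤ p) (n : ℕ) (hn : 1 ≤ n) :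
    ∑' x : ℚ, |krivineVec p n x| ^ p = 1 := by
  have hp0 : p ≠ 0 := (zero_lt_one.trans_le hp).ne'
  simp_rw [krivineVec_eq_sum, abs_sum_mul_indicator_one_rpow (pairwiseDisjoint_lorSupportSet _)
    (fun q _ => krivineCoeff_nonneg p n q) hp0, ← coe_lorFinset]
  rw [tsum_sum_mul_indicator_one, sum_congr rfl fun q _ => by
    rw [card_lorFinset, krivineCoeff_rpow_mul hp0], sum_const, card_product, Nat.card_Icc,
    nsmul_eq_mul]
  have : (n : ℝ) ≠ 0 := Nat.cast_ne_zero.2 (by omega)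
  push_cast
  field_simp
end

section
/- With u_n as defined in the context, the sum over all rationals x of |2^{-1/p}·(u_n(2x) + u_n(2x−1)) − u_n(x)|^p equals 2/n. In other words, ‖2^{-1/p}·D₂u_n − u_n‖_{ℓ^p(ℚ)} = (2/n)^{1/p}, so these vectors form an approximate eigenvector of D₂ with approximate eigenvalue 2^{1/p}. -/
/-!
Writing `N = 2^l 3^m`, the support set is `S(l,m) = {(t + 1/6)/N : t < N}`, a set of `N` points of
`[0,1)` whose reduced denominators `6N` determine `(l,m)`, so the sets `S(l,m)` are pairwise
disjoint. As `S(l,m) ⊆ [0,1)`, `D₂ 1_{S(l,m)} = 1_{S(l+1,m)}`; hence `2^{-1/p} D₂ u_n - u_n`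
telescopes in `j` to `n^{-2/p} Σ_k 3^{-k/p} (2^{-(n+1)/p} 1_{S(n+1,k)} - 2^{-1/p} 1_{S(1,k)})`.
These `2n` terms have disjoint supports and each contributes `n^{-2}` to the `ℓ^p` sum.
-/

open Finset Function

section IndicatorSums

variable {ι α : Type*} {p : ℝ}

theorem abs_sum_mul_indicator_rpow (hp : p ≠ 0) {s : Finset ι} {A : ι → Set α}
    (hA : (s : Set ι).PairwiseDisjoint A) (c : ι → ℝ) (x : α) :
    |∑ i ∈ s, c i * (A i).indicator (fun _ => (1 : ℝ)) x| ^ p =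
      ∑ i ∈ s, |c i| ^ p * (A i).indicator (fun _ => (1 : ℝ)) x := by
  by_cases hx : ∃ i ∈ s, x ∈ A i
  · obtain ⟨i, hi, hxi⟩ := hx
    have hnot : ∀ j ∈ s, j ≠ i → x ∉ A j := fun j hj hji hxj =>
      Set.disjoint_left.mp (hA hj hi hji) hxj hxi
    rw [sum_eq_single_of_mem i hi fun j hj hji => by simp [hnot j hj hji],
      sum_eq_single_of_mem i hi fun j hj hji => by simp [hnot j hj hji],
      Set.indicator_of_mem hxi, mul_one, mul_one]
  · push Not at hx
    rw [sum_eq_zero fun i hi => by simp [hx i hi], sum_eq_zero fun i hi => by simp [hx i hi],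
      abs_zero, Real.zero_rpow hp]

theorem tsum_abs_sum_mul_indicator_rpow (hp : p ≠ 0) {s : Finset ι} {A : ι → Set α}
    (hA : (s : Set ι).PairwiseDisjoint A) (hfin : ∀ i ∈ s, (A i).Finite) (c : ι → ℝ) :
    ∑' x, |∑ i ∈ s, c i * (A i).indicator (fun _ => (1 : ℝ)) x| ^ p =
      ∑ i ∈ s, |c i| ^ p * (A i).ncard := by
  simp_rw [abs_sum_mul_indicator_rpow hp hA]
  rw [Summable.tsum_finsetSum fun i hi => summable_of_ne_finset_zero (s := (hfin i hi).toFinset)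
    fun x hx => by simp_all]
  refine sum_congr rfl fun i hi => ?_
  rw [tsum_mul_left, ← (hfin i hi).coe_toFinset, ← sum_eq_tsum_indicator, Set.ncard_coe_finset]
  simp

end IndicatorSums

def shiftedGrid (a : ℚ) (N : ℕ) : Finset ℚ :=
  (range N).image fun t : ℕ => ((t : ℚ) + a) / N

section ShiftedGrid

variable {a x : ℚ} {N : ℕ}

theorem mem_shiftedGrid : x ∈ shiftedGrid a N ↔ ∃ t < N, (t + a) / N = x := by
  simp [shiftedGrid]

theorem card_shiftedGrid : #(shiftedGrid a N) = N := by
  rcases eq_or_ne N 0 with rfl | hN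
  · simp [shiftedGrid]
  rw [shiftedGrid, card_image_of_injective _ fun t t' h => ?_, card_range]
  have hN' : (N : ℚ) ≠ 0 := Nat.cast_ne_zero.mpr hN
  simpa [div_left_inj' hN'] using h

theorem mem_Ico_of_mem_shiftedGrid (ha₀ : 0 ≤ a) (ha₁ : a < 1) (hx : x ∈ shiftedGrid a N) :
    x ∈ Set.Ico 0 1 := by
  obtain ⟨t, ht, rfl⟩ := mem_shiftedGrid.mp hx
  have hN : (0 : ℚ) < N := by exact_mod_cast (Nat.zero_le t).trans_lt ht
  have ht' : (t : ℚ) + 1 ≤ N := by exact_mod_cast ht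
  exact ⟨by positivity, (div_lt_one hN).mpr (by linarith)⟩

theorem mem_shiftedGrid_two_mul_iff :
    x ∈ shiftedGrid a (2 * N) ↔ 2 * x ∈ shiftedGrid a N ∨ 2 * x - 1 ∈ shiftedGrid a N := by
  simp only [mem_shiftedGrid]
  constructor
  · rintro ⟨t, ht, rfl⟩
    have hN : (N : ℚ) ≠ 0 := by norm_cast; omega
    rcases lt_or_ge t N with htN | htN
    · exact Or.inl ⟨t, htN, by push_cast; field_simp⟩
    · refine Or.inr ⟨t - N, by omega, ?_⟩
      push_cast [Nat.cast_sub htN]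
      field_simp
      ring
  · rintro (⟨t, ht, h⟩ | ⟨t, ht, h⟩)
    · exact ⟨t, by omega, by push_cast; linear_combination h / 2⟩
    · have hN : (N : ℚ) ≠ 0 := by norm_cast; omega
      refine ⟨t + N, by omega, ?_⟩
      push_cast
      field_simp at h ⊢
      linear_combination h

theorem indicator_shiftedGrid_two_mul_add (ha₀ : 0 ≤ a) (ha₁ : a < 1) :
    (shiftedGrid a N : Set ℚ).indicator (fun _ => (1 : ℝ)) (2 * x) +
        (shiftedGrid a N : Set ℚ).indicator (fun _ => (1 : ℝ)) (2 * x - 1) =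
      (shiftedGrid a (2 * N) : Set ℚ).indicator (fun _ => (1 : ℝ)) x := by
  have hexcl : 2 * x ∈ shiftedGrid a N → 2 * x - 1 ∉ shiftedGrid a N := fun h h' => by
    have := (mem_Ico_of_mem_shiftedGrid ha₀ ha₁ h).2
    have := (mem_Ico_of_mem_shiftedGrid ha₀ ha₁ h').1
    linarith
  by_cases h : 2 * x ∈ shiftedGrid a N
  · simp [mem_shiftedGrid_two_mul_iff, h, hexcl h]
  · by_cases h' : 2 * x - 1 ∈ shiftedGrid a N <;> simp [mem_shiftedGrid_two_mul_iff, h, h']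

end ShiftedGrid

theorem lorSupportSet_eq_shiftedGrid (l m : ℕ) :
    lorSupportSet l m = shiftedGrid (1 / 6) (2 ^ l * 3 ^ m) := by
  ext x
  rw [Finset.mem_coe, mem_shiftedGrid]
  have h2 : (2 : ℚ) ^ l ≠ 0 := by positivity
  have h3 : (3 : ℚ) ^ m ≠ 0 := by positivity
  constructor
  · rintro ⟨i, j, hi, hj, rfl⟩
    refine ⟨i + 2 ^ l * j, by nlinarith, ?_⟩
    simp only [zpow_neg, zpow_natCast]
    push_cast
    field_simp
    ring
  · rintro ⟨t, ht, rfl⟩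
    refine ⟨t % 2 ^ l, t / 2 ^ l, Nat.mod_lt _ (by positivity), Nat.div_lt_of_lt_mul ht, ?_⟩
    have hdiv : ((t % 2 ^ l : ℕ) : ℚ) + 2 ^ l * ((t / 2 ^ l : ℕ) : ℚ) = t := by
      exact_mod_cast Nat.mod_add_div t (2 ^ l)
    simp only [zpow_neg, zpow_natCast]
    push_cast
    field_simp
    linear_combination (-(6 : ℚ)) * hdiv

theorem den_of_mem_lorSupportSet {l m : ℕ} {x : ℚ} (hx : x ∈ lorSupportSet l m) :
    x.den = 2 ^ (l + 1) * 3 ^ (m + 1) := by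
  rw [lorSupportSet_eq_shiftedGrid, Finset.mem_coe, mem_shiftedGrid] at hx
  obtain ⟨t, -, rfl⟩ := hx
  have hcop : Nat.Coprime (6 * t + 1) (2 ^ (l + 1) * 3 ^ (m + 1)) := by
    refine Nat.Coprime.mul_right (Nat.Coprime.pow_right _ ?_) (Nat.Coprime.pow_right _ ?_)
    · rw [Nat.coprime_comm, Nat.Prime.coprime_iff_not_dvd Nat.prime_two]; omega
    · rw [Nat.coprime_comm, Nat.Prime.coprime_iff_not_dvd Nat.prime_three]; omega
  have hx : ((t : ℚ) + 1 / 6) / ((2 ^ l * 3 ^ m : ℕ) : ℚ) =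
      ((6 * t + 1 : ℕ) : ℤ) / ((2 ^ (l + 1) * 3 ^ (m + 1) : ℕ) : ℤ) := by
    push_cast; field_simp; ring
  rw [hx]
  exact Int.natCast_inj.mp
    (Rat.den_div_eq_of_coprime (by positivity) (by simpa only [Int.natAbs_natCast] using hcop))

theorem pairwise_disjoint_lorSupportSet :
    Pairwise (Disjoint on fun i : ℕ × ℕ => lorSupportSet i.1 i.2) := by
  rintro ⟨l, m⟩ ⟨l', m'⟩ hne
  refine Set.disjoint_left.mpr fun x hx hx' => hne ?_
  have hden := (den_of_mem_lorSupportSet hx).symm.trans (den_of_mem_lorSupportSet hx')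
  have h2 := congrArg (fun d => d.factorization 2) hden
  have h3 := congrArg (fun d => d.factorization 3) hden
  simp [Nat.factorization_mul, Nat.factorization_pow, Nat.prime_two.factorization,
    Nat.prime_three.factorization] at h2 h3
  rw [h2, h3]

theorem finite_lorSupportSet (l m : ℕ) : (lorSupportSet l m).Finite := by
  rw [lorSupportSet_eq_shiftedGrid]
  exact Finset.finite_toSet _

theorem ncard_lorSupportSet (l m : ℕ) : (lorSupportSet l m).ncard = 2 ^ l * 3 ^ m := by
  rw [lorSupportSet_eq_shiftedGrid, Set.ncard_coe_finset, card_shiftedGrid]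

noncomputable def krivineAtom (p : ℝ) (j k : ℕ) (x : ℚ) : ℝ :=
  (2 : ℝ) ^ (-(j : ℝ) / p) * (3 : ℝ) ^ (-(k : ℝ) / p) *
    (lorSupportSet j k).indicator (fun _ => (1 : ℝ)) x

theorem krivineVec_eq_sum_krivineAtom (p : ℝ) (n : ℕ) (x : ℚ) :
    krivineVec p n x = (n : ℝ) ^ (-(2 / p)) *
      ∑ k ∈ Icc 1 n, ∑ j ∈ Icc 1 n, krivineAtom p j k x := by
  rw [krivineVec, sum_comm]
  rfl

theorem krivineAtom_two_mul_add (p : ℝ) (j k : ℕ) (x : ℚ) :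
    (2 : ℝ) ^ (-(1 / p)) * (krivineAtom p j k (2 * x) + krivineAtom p j k (2 * x - 1)) =
      krivineAtom p (j + 1) k x := by
  have hpow : (2 : ℝ) ^ (-(1 / p)) * (2 : ℝ) ^ (-(j : ℝ) / p) =
      (2 : ℝ) ^ (-((j + 1 : ℕ) : ℝ) / p) := by
    rw [← Real.rpow_add two_pos]
    push_cast
    ring_nf
  have hset : lorSupportSet (j + 1) k = shiftedGrid (1 / 6) (2 * (2 ^ j * 3 ^ k)) := by
    rw [lorSupportSet_eq_shiftedGrid, pow_succ]
    ring_nf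
  rw [krivineAtom, krivineAtom, krivineAtom, hset, lorSupportSet_eq_shiftedGrid,
    ← indicator_shiftedGrid_two_mul_add (by norm_num) (by norm_num), ← hpow]
  ring

theorem krivineVec_two_mul_add_sub (p : ℝ) {n : ℕ} (hn : 1 ≤ n) (x : ℚ) :
    (2 : ℝ) ^ (-(1 / p)) * (krivineVec p n (2 * x) + krivineVec p n (2 * x - 1)) -
        krivineVec p n x =
      (n : ℝ) ^ (-(2 / p)) * ∑ k ∈ Icc 1 n, (krivineAtom p (n + 1) k x - krivineAtom p 1 k x) := by
  have htelescope : ∀ k ∈ Icc 1 n, ∑ j ∈ Icc 1 n, ((2 : ℝ) ^ (-(1 / p)) *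
      (krivineAtom p j k (2 * x) + krivineAtom p j k (2 * x - 1)) - krivineAtom p j k x) =
      krivineAtom p (n + 1) k x - krivineAtom p 1 k x := fun k _ => by
    simp only [krivineAtom_two_mul_add]
    exact sum_Icc_sub hn fun j => krivineAtom p j k x
  simp only [krivineVec_eq_sum_krivineAtom, ← sum_congr rfl htelescope]
  simp only [mul_sum, mul_add, mul_sub, sum_add_distrib, sum_sub_distrib]
  ring_nf

theorem krivineVec_two_mul_add_sub_eq_sum (p : ℝ) {n : ℕ} (hn : 1 ≤ n) (x : ℚ) :
    (2 : ℝ) ^ (-(1 / p)) * (krivineVec p n (2 * x) + krivineVec p n (2 * x - 1)) -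
        krivineVec p n x =
      ∑ i ∈ ({n + 1, 1} : Finset ℕ) ×ˢ Icc 1 n,
        (if i.1 = 1 then -1 else 1) *
            ((n : ℝ) ^ (-(2 / p)) * (2 : ℝ) ^ (-(i.1 : ℝ) / p) * (3 : ℝ) ^ (-(i.2 : ℝ) / p)) *
          (lorSupportSet i.1 i.2).indicator (fun _ => (1 : ℝ)) x := by
  have hn1 : n + 1 ≠ 1 := by omega
  rw [krivineVec_two_mul_add_sub p hn, sum_product, sum_pair hn1, mul_sum, ← sum_add_distrib]
  refine sum_congr rfl fun k _ => ?_
  simp only [krivineAtom, if_neg hn1, ↓reduceIte]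
  ring

theorem abs_mul_rpow_mul_ncard_lorSupportSet {p σ c : ℝ} (hp : p ≠ 0) (hσ : |σ| = 1)
    (hc : 0 ≤ c) (l k : ℕ) :
    |σ * (c * (2 : ℝ) ^ (-(l : ℝ) / p) * (3 : ℝ) ^ (-(k : ℝ) / p))| ^ p *
      (lorSupportSet l k).ncard = c ^ p := by
  have hrpow : ∀ {a : ℝ}, 0 ≤ a → ∀ b : ℝ, (a ^ (b / p)) ^ p = a ^ b := fun ha b => by
    rw [← Real.rpow_mul ha, div_mul_cancel₀ _ hp]
  rw [abs_mul, hσ, one_mul, abs_of_nonneg (by positivity),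
    Real.mul_rpow (by positivity) (by positivity), Real.mul_rpow hc (by positivity),
    hrpow zero_le_two, hrpow zero_le_three, ncard_lorSupportSet, Real.rpow_neg zero_le_two,
    Real.rpow_neg zero_le_three, Real.rpow_natCast, Real.rpow_natCast]
  push_cast
  field_simp

/-- `Σ_x |2^{-1/p}(D₂u_n)(x) − u_n(x)|^p = 2/n`, where `(D₂u)(x) = u(2x) + u(2x−1)`;
equivalently `‖2^{-1/p}·D₂u_n − u_n‖_{ℓ^p(ℚ)} = (2/n)^{1/p}`. -/
theorem stmt3 (p : ℝ) (hp : 1 ≤ p) (n : ℕ) (hn : 1 ≤ n) :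
    ∑' x : ℚ,
      |(2 : ℝ) ^ (-(1 / p)) * (krivineVec p n (2 * x) + krivineVec p n (2 * x - 1)) -
        krivineVec p n x| ^ p = 2 / n := by
  have hp0 : p ≠ 0 := (zero_lt_one.trans_le hp).ne'
  have hsign : ∀ l : ℕ, |(if l = 1 then -1 else 1 : ℝ)| = 1 := fun l => by split_ifs <;> simp
  have hn0 : (n : ℝ) ≠ 0 := Nat.cast_ne_zero.mpr (by omega)
  calc _ = _ := tsum_congr fun x => by rw [krivineVec_two_mul_add_sub_eq_sum p hn x]
    _ = _ := tsum_abs_sum_mul_indicator_rpow hp0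
          (pairwise_disjoint_lorSupportSet.set_pairwise _) (fun i _ => finite_lorSupportSet _ _) _
    _ = ∑ _ ∈ ({n + 1, 1} : Finset ℕ) ×ˢ Icc 1 n, ((n : ℝ) ^ (-(2 / p))) ^ p :=
          sum_congr rfl fun i _ =>
            abs_mul_rpow_mul_ncard_lorSupportSet hp0 (hsign i.1) (by positivity) i.1 i.2
    _ = 2 / n := by
      rw [← Real.rpow_mul n.cast_nonneg, neg_mul, div_mul_cancel₀ _ hp0, Real.rpow_neg
        n.cast_nonneg, Real.rpow_two, sum_const, card_product, card_pair (by omega),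
        Nat.card_Icc, Nat.add_sub_cancel, nsmul_eq_mul, Nat.cast_mul, Nat.cast_two]
      field_simp
end

section
/- Let m ≥ 1 and let (F_s)_{s∈ℕ} be a sequence of seminorms on ℝ^m (that is, F_s : Seminorm ℝ (Fin m → ℝ)) such that for every s and every a ∈ ℝ^m, max_{1≤j≤m} |a_j| ≤ F_s(a) ≤ Σ_{j=1}^m |a_j|. Let F : ℝ^m → ℝ be such that F_s(a) → F(a) as s → ∞ for every a ∈ ℝ^m. Then for every ε > 0 there exists s₀ ∈ ℕ such that for every s ≥ s₀ and every a ∈ ℝ^m, F(a) ≤ (1+ε)·F_s(a) and F_s(a) ≤ (1+ε)·F(a). -/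
/-!
The seminorms are uniformly bounded by `m` times the sup norm, hence uniformly `m`-Lipschitz, so
pointwise convergence is uniform on the compact unit ball. The limit is absolutely homogeneous,
so by scaling `|F s a - Flim a| ≤ ε ‖a‖` for all `a` once `s` is large; the lower bound
`‖a‖ ≤ F s a, Flim a` turns this additive error into the multiplicative factor `1 + ε`.
-/

open Filter Topology NNReal

theorem LipschitzWith.tendstoUniformlyOn_of_tendsto {ι X Y : Type*} [PseudoEMetricSpace X]
    [PseudoEMetricSpace Y] {F : ι → X → Y} {f : X → Y} {K : ℝ≥0} {l : Filter ι} {S : Set X}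
    (hF : ∀ i, LipschitzWith K (F i)) (hS : IsCompact S)
    (h : ∀ x ∈ S, Tendsto (F · x) l (𝓝 (f x))) :
    TendstoUniformlyOn F f l S := by
  have hequi : EquicontinuousOn F S :=
    (LipschitzWith.uniformEquicontinuous F K hF).equicontinuous.equicontinuousOn S
  have hS_unif := (EquicontinuousOn.tendsto_uniformOnFun_iff_pi' (𝔖 := {S})
    (by simpa using hS) (by simpa using hequi) l f).2 (by simpa [tendsto_pi_nhds] using h)
  exact UniformOnFun.tendsto_iff_tendstoUniformlyOn.1 hS_unif S rfl

namespace Seminorm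

theorem lipschitzWith_of_le_mul_norm {𝕜 E : Type*} [NormedField 𝕜] [SeminormedAddCommGroup E]
    [NormedSpace 𝕜 E] {p : Seminorm 𝕜 E} {C : ℝ≥0} (hC : ∀ x, p x ≤ C * ‖x‖) :
    LipschitzWith C p :=
  LipschitzWith.of_dist_le_mul fun x y => by
    simpa only [Real.dist_eq, dist_eq_norm] using (p.norm_sub_map_le_sub x y).trans (hC (x - y))

theorem map_smul_of_tendsto {ι 𝕜 E : Type*} [NormedField 𝕜] [AddCommGroup E] [Module 𝕜 E]
    {p : ι → Seminorm 𝕜 E} {f : E → ℝ} {l : Filter ι} [l.NeBot]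
    (h : ∀ x, Tendsto (p · x) l (𝓝 (f x))) (c : 𝕜) (x : E) : f (c • x) = ‖c‖ * f x :=
  tendsto_nhds_unique (h (c • x)) (by simpa only [map_smul_eq_mul] using (h x).const_mul ‖c‖)

theorem eventually_abs_sub_le_mul_norm_of_tendsto {ι E : Type*} [NormedAddCommGroup E]
    [NormedSpace ℝ E] [ProperSpace E] {p : ι → Seminorm ℝ E} {f : E → ℝ} {l : Filter ι}
    [l.NeBot] {C : ℝ≥0} (hC : ∀ i x, p i x ≤ C * ‖x‖) (h : ∀ x, Tendsto (p · x) l (𝓝 (f x)))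
    {δ : ℝ} (hδ : 0 < δ) :
    ∀ᶠ i in l, ∀ x, |p i x - f x| ≤ δ * ‖x‖ := by
  have hunif : TendstoUniformlyOn (fun i => ⇑(p i)) f l (Metric.closedBall 0 1) :=
    LipschitzWith.tendstoUniformlyOn_of_tendsto (fun i => lipschitzWith_of_le_mul_norm (hC i))
      (isCompact_closedBall 0 1) fun x _ => h x
  filter_upwards [Metric.tendstoUniformlyOn_iff.1 hunif δ hδ] with i hi x
  rcases eq_or_ne x 0 with rfl | hx
  · simp [show f 0 = 0 by simpa using map_smul_of_tendsto h (0 : ℝ) 0]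
  set u := ‖x‖⁻¹ • x
  have hu : u ∈ Metric.closedBall 0 1 :=
    mem_closedBall_zero_iff.2 (norm_smul_inv_norm (𝕜 := ℝ) hx).le
  have hxu : x = ‖x‖ • u := (smul_inv_smul₀ (norm_ne_zero_iff.2 hx) x).symm
  calc |p i x - f x| = |p i (‖x‖ • u) - f (‖x‖ • u)| := by rw [← hxu]
    _ = ‖x‖ * |f u - p i u| := by
        rw [map_smul_eq_mul, map_smul_of_tendsto h, ← mul_sub, abs_mul, abs_sub_comm, norm_norm,
          abs_norm]
    _ ≤ ‖x‖ * δ := by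
        gcongr
        simpa [Real.dist_eq] using (hi u hu).le
    _ = δ * ‖x‖ := mul_comm _ _

end Seminorm

theorem stmt4_general (m : ℕ)
    (F : ℕ → Seminorm ℝ (Fin m → ℝ)) (Flim : (Fin m → ℝ) → ℝ)
    (hlow : ∀ (s : ℕ) (a : Fin m → ℝ) (j : Fin m), |a j| ≤ F s a)
    (hup : ∀ (s : ℕ) (a : Fin m → ℝ), F s a ≤ ∑ j, |a j|)
    (hconv : ∀ a : Fin m → ℝ, Tendsto (fun s => F s a) atTop (nhds (Flim a))) :
    ∀ ε : ℝ, 0 < ε → ∃ s₀ : ℕ, ∀ s ≥ s₀, ∀ a : Fin m → ℝ,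
      Flim a ≤ (1 + ε) * F s a ∧ F s a ≤ (1 + ε) * Flim a := by
  intro ε hε
  have hnorm_le : ∀ s a, ‖a‖ ≤ F s a := fun s a =>
    (pi_norm_le_iff_of_nonneg (apply_nonneg _ _)).2 fun j => hlow s a j
  have hnorm_le_lim : ∀ a, ‖a‖ ≤ Flim a := fun a => ge_of_tendsto' (hconv a) (hnorm_le · a)
  have hle_norm : ∀ s a, F s a ≤ (m : ℝ≥0) * ‖a‖ := fun s a => by
    simpa using (hup s a).trans (Pi.sum_norm_apply_le_norm a)
  obtain ⟨s₀, hs₀⟩ := eventually_atTop.1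
    (Seminorm.eventually_abs_sub_le_mul_norm_of_tendsto hle_norm hconv hε)
  refine ⟨s₀, fun s hs a => ?_⟩
  have hclose := abs_le.1 (hs₀ s hs a)
  have hε_le := mul_le_mul_of_nonneg_left (hnorm_le s a) hε.le
  have hε_le_lim := mul_le_mul_of_nonneg_left (hnorm_le_lim a) hε.le
  constructor <;> linarith

theorem stmt4 (m : ℕ) (hm : 1 ≤ m)
    (F : ℕ → Seminorm ℝ (Fin m → ℝ)) (Flim : (Fin m → ℝ) → ℝ)
    (hlow : ∀ (s : ℕ) (a : Fin m → ℝ) (j : Fin m), |a j| ≤ F s a)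
    (hup : ∀ (s : ℕ) (a : Fin m → ℝ), F s a ≤ ∑ j, |a j|)
    (hconv : ∀ a : Fin m → ℝ, Tendsto (fun s => F s a) atTop (nhds (Flim a))) :
    ∀ ε : ℝ, 0 < ε → ∃ s₀ : ℕ, ∀ s ≥ s₀, ∀ a : Fin m → ℝ,
      Flim a ≤ (1 + ε) * F s a ∧ F s a ≤ (1 + ε) * Flim a :=
  stmt4_general m F Flim hlow hup hconv
end

section
/- Let X be a real normed space, T : X → X a bounded linear operator, λ > 0, C > 0, and δ : ℕ → ℝ with δ(n) → ∞. Suppose that for every n ≥ 1 there exist vectors z_1, …, z_n ∈ X with T z_k = λ·z_{k+1} for all 1 ≤ k ≤ n−1, ‖z_k‖ ≤ C for all 1 ≤ k ≤ n, and ‖Σ_{k=1}^n z_k‖ ≥ δ(n). Then λ is an approximate eigenvalue of T: there exists a sequence (u_m) in X with ‖u_m‖ = 1 for all m and ‖T u_m − λ·u_m‖ → 0 as m → ∞. -/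
open Filter

lemma stmt5_tele {X : Type*} [NormedAddCommGroup X] [NormedSpace ℝ X]
    (T : X →L[ℝ] X) (lam : ℝ) (z : ℕ → X) :
    ∀ n, 1 ≤ n → (∀ k, 1 ≤ k → k + 1 ≤ n → T (z k) = lam • z (k + 1)) →
      T (∑ k ∈ Finset.Icc 1 n, z k) - lam • ∑ k ∈ Finset.Icc 1 n, z k
        = T (z n) - lam • z 1 := by
  intro n
  induction n with
  | zero => intro h; omega
  | succ n ih =>
    intro _ hz
    rcases Nat.eq_zero_or_pos n with rfl | hn
    · simp
    · rw [Finset.sum_Icc_succ_top (by omega : 1 ≤ n + 1)]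
      have key := ih hn (fun k hk hk' => hz k hk (by omega))
      have hTn : T (z n) = lam • z (n + 1) := hz n hn (le_refl _)
      have key' := eq_add_of_sub_eq key
      rw [map_add, smul_add, key', hTn]
      abel

theorem stmt5 {X : Type*} [NormedAddCommGroup X] [NormedSpace ℝ X]
    (T : X →L[ℝ] X) (lam C : ℝ) (hlam : 0 < lam) (hC : 0 < C)
    (δ : ℕ → ℝ) (hδ : Tendsto δ atTop atTop)
    (h : ∀ n : ℕ, 1 ≤ n → ∃ z : ℕ → X,
      (∀ k, 1 ≤ k → k + 1 ≤ n → T (z k) = lam • z (k + 1)) ∧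
      (∀ k, 1 ≤ k → k ≤ n → ‖z k‖ ≤ C) ∧
      δ n ≤ ‖∑ k ∈ Finset.Icc 1 n, z k‖) :
    ∃ u : ℕ → X, (∀ m, ‖u m‖ = 1) ∧
      Tendsto (fun m => ‖T (u m) - lam • u m‖) atTop (nhds 0) := by
  set K : ℝ := ‖T‖ * C + lam * C with hK
  have hKpos : 0 ≤ K := by positivity
  have main : ∀ m : ℕ, ∃ v : X, ‖v‖ = 1 ∧ ‖T v - lam • v‖ ≤ K / (m + 1) := by
    intro m
    obtain ⟨N, hN⟩ := (tendsto_atTop_atTop.mp hδ) ((m : ℝ) + 1)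
    set n := max N 1 with hn
    have hn1 : 1 ≤ n := le_max_right _ _
    have hδn : (m : ℝ) + 1 ≤ δ n := hN n (le_max_left _ _)
    obtain ⟨z, hz1, hz2, hz3⟩ := h n hn1
    set w : X := ∑ k ∈ Finset.Icc 1 n, z k with hw
    have hwge : (m : ℝ) + 1 ≤ ‖w‖ := le_trans hδn hz3
    have hm1 : (0 : ℝ) < (m : ℝ) + 1 := by positivity
    have hwpos : 0 < ‖w‖ := lt_of_lt_of_le hm1 hwge
    refine ⟨‖w‖⁻¹ • w, ?_, ?_⟩
    · rw [norm_smul, norm_inv, norm_norm, inv_mul_cancel₀ hwpos.ne']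
    · have hrw : T (‖w‖⁻¹ • w) - lam • (‖w‖⁻¹ • w) = ‖w‖⁻¹ • (T w - lam • w) := by
        rw [map_smul, smul_sub, smul_comm]
      rw [hrw, norm_smul, norm_inv, norm_norm]
      have htele := stmt5_tele T lam z n hn1 hz1
      have hbound : ‖T w - lam • w‖ ≤ K := by
        rw [hw, htele]
        calc ‖T (z n) - lam • z 1‖ ≤ ‖T (z n)‖ + ‖lam • z 1‖ := norm_sub_le _ _
          _ ≤ ‖T‖ * ‖z n‖ + lam * ‖z 1‖ := by
              rw [norm_smul, Real.norm_eq_abs, abs_of_pos hlam]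
              exact add_le_add (T.le_opNorm _) le_rfl
          _ ≤ ‖T‖ * C + lam * C :=
              add_le_add
                (mul_le_mul_of_nonneg_left (hz2 n hn1 le_rfl) (norm_nonneg _))
                (mul_le_mul_of_nonneg_left (hz2 1 le_rfl hn1) hlam.le)
      calc ‖w‖⁻¹ * ‖T w - lam • w‖ ≤ ‖w‖⁻¹ * K :=
            mul_le_mul_of_nonneg_left hbound (inv_nonneg.mpr hwpos.le)
        _ ≤ ((m : ℝ) + 1)⁻¹ * K :=
            mul_le_mul_of_nonneg_right (inv_anti₀ hm1 hwge) hKpos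
        _ = K / (m + 1) := by ring
  choose u hu1 hu2 using main
  refine ⟨u, hu1, ?_⟩
  have hlim : Tendsto (fun m : ℕ => K / (m + 1)) atTop (nhds 0) := by
    apply Tendsto.div_atTop tendsto_const_nhds
    exact tendsto_atTop_add_const_right atTop 1 tendsto_natCast_atTop_atTop
  exact squeeze_zero (fun m => norm_nonneg _) hu2 hlim
end

section
/- Let X be a real Banach lattice and T : X → X a positive bounded linear operator (0 ≤ x implies 0 ≤ T x). Let ρ > 0 and suppose that ρ^n ≤ ‖T^n‖ for every n ∈ ℕ and that ‖T^n‖^{1/n} → ρ as n → ∞. Then ρ is an approximate eigenvalue of T: there exists a sequence (x_j) in X with ‖x_j‖ = 1 and ‖T x_j − ρ·x_j‖ → 0. -/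
/-!
For `t > ρ` the Neumann series `∑ t⁻ⁿ⁻¹ Tⁿ` converges by the root test, so the resolvent `R(t)`
of `T` is a positive operator. Its norm is at least `(t - ρ)⁻¹`: otherwise a second Neumann series
perturbs `R(t)` into a positive right inverse `B` of `μ - T` for some `0 < μ < ρ`, and positivity
gives `Tⁿ x ≤ μⁿ⁺¹ B x` on the positive cone, hence `ρⁿ ≤ ‖Tⁿ‖ ≤ μⁿ⁺¹ ‖B‖` for all `n`, which is
impossible. Normalising `z = R(t) y` with `‖y‖ < 1` and `‖z‖` large gives an approximate
eigenvector, since `T z - ρ z = (t - ρ) z - y`.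
-/

open Filter Topology

theorem eventually_le_pow_of_tendsto_rpow_one_div {f : ℕ → ℝ} {r c : ℝ} (hf : ∀ n, 0 ≤ f n)
    (h : Tendsto (fun n : ℕ => f n ^ (1 / (n : ℝ))) atTop (𝓝 r)) (hrc : r < c) :
    ∀ᶠ n in atTop, f n ≤ c ^ n := by
  filter_upwards [h.eventually_lt_const hrc, eventually_ne_atTop 0] with n hn hn0
  calc f n = (f n ^ (1 / (n : ℝ))) ^ n := by
        rw [one_div, Real.rpow_inv_natCast_pow (hf n) hn0]
    _ ≤ c ^ n := pow_le_pow_left₀ (Real.rpow_nonneg (hf n) _) hn.le n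

theorem le_of_forall_pow_le_mul_pow {ρ μ C : ℝ} (hμ : 0 < μ) (h : ∀ n : ℕ, ρ ^ n ≤ C * μ ^ n) :
    ρ ≤ μ := by
  by_contra! hμρ
  obtain ⟨n, hn⟩ :=
    ((tendsto_pow_atTop_atTop_of_one_lt ((one_lt_div hμ).mpr hμρ)).eventually_gt_atTop C).exists
  rw [div_pow, lt_div_iff₀ (by positivity)] at hn
  linarith [h n]

theorem algebraMap_sub_eq_smul_one_sub {𝕜 A : Type*} [Field 𝕜] [Ring A] [Algebra 𝕜 A] {a : A}
    {t : 𝕜} (ht : t ≠ 0) : algebraMap 𝕜 A t - a = t • (1 - t⁻¹ • a) := by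
  rw [smul_sub, smul_inv_smul₀ ht, Algebra.algebraMap_eq_smul_one]

section Resolvent

variable {𝕜 A : Type*} [Field 𝕜] [Ring A] [Algebra 𝕜 A] [TopologicalSpace A]
  [IsTopologicalRing A] [T2Space A] {a : A} {t : 𝕜}

theorem resolvent_eq_smul_tsum_pow (ht : t ≠ 0) (h : Summable fun n : ℕ => (t⁻¹ • a) ^ n) :
    resolvent a t = t⁻¹ • ∑' n : ℕ, (t⁻¹ • a) ^ n := by
  let u : Aˣ :=
    { val := algebraMap 𝕜 A t - a
      inv := t⁻¹ • ∑' n : ℕ, (t⁻¹ • a) ^ n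
      val_inv := by
        rw [algebraMap_sub_eq_smul_one_sub ht, smul_mul_smul_comm, mul_inv_cancel₀ ht, one_smul,
          h.one_sub_mul_tsum_pow]
      inv_val := by
        rw [algebraMap_sub_eq_smul_one_sub ht, smul_mul_smul_comm, inv_mul_cancel₀ ht, one_smul,
          h.tsum_pow_mul_one_sub] }
  exact Ring.inverse_unit u

theorem algebraMap_sub_mul_resolvent (ht : t ≠ 0) (h : Summable fun n : ℕ => (t⁻¹ • a) ^ n) :
    (algebraMap 𝕜 A t - a) * resolvent a t = 1 := by
  rw [resolvent_eq_smul_tsum_pow ht h, algebraMap_sub_eq_smul_one_sub ht, smul_mul_smul_comm,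
    mul_inv_cancel₀ ht, one_smul, h.one_sub_mul_tsum_pow]

end Resolvent

theorem algebraMap_sub_mul_mul_tsum_pow {𝕜 A : Type*} [Field 𝕜] [NormedRing A] [Algebra 𝕜 A]
    [HasSummableGeomSeries A] {a r : A} {t δ : 𝕜} (h : (algebraMap 𝕜 A t - a) * r = 1)
    (hδ : ‖δ • r‖ < 1) :
    (algebraMap 𝕜 A (t - δ) - a) * (r * ∑' n : ℕ, (δ • r) ^ n) = 1 := by
  rw [← mul_assoc, map_sub, sub_right_comm, sub_mul, h, Algebra.algebraMap_eq_smul_one δ,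
    smul_one_mul, mul_neg_geom_series _ hδ]

theorem summable_pow_inv_smul_of_tendsto {A : Type*} [NormedRing A] [NormedAlgebra ℝ A]
    [CompleteSpace A] {a : A} {ρ t : ℝ}
    (hlim : Tendsto (fun n : ℕ => ‖a ^ n‖ ^ (1 / (n : ℝ))) atTop (𝓝 ρ)) (hρt : ρ < t) :
    Summable fun n : ℕ => (t⁻¹ • a) ^ n := by
  have hρ : 0 ≤ ρ := ge_of_tendsto' hlim fun n => by positivity
  have ht : 0 < t := hρ.trans_lt hρt
  refine Summable.of_norm_bounded_eventually_nat (summable_geometric_of_lt_one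
    (by positivity) ((div_lt_one ht).mpr (by linarith : (ρ + t) / 2 < t))) ?_
  filter_upwards [eventually_le_pow_of_tendsto_rpow_one_div (fun n => norm_nonneg _) hlim
    (show ρ < (ρ + t) / 2 by linarith)] with n hn
  rw [smul_pow, norm_smul, div_pow, norm_pow, norm_inv, Real.norm_of_nonneg ht.le, inv_pow,
    div_eq_inv_mul]
  gcongr

theorem exists_norm_eq_one_and_norm_sub_smul_le {E : Type*} [NormedAddCommGroup E]
    [NormedSpace ℝ E] {T R : E →L[ℝ] E} {t r : ℝ} (hR : (algebraMap ℝ (E →L[ℝ] E) t - T) * R = 1)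
    (hr : 0 < r) (hrR : r < ‖R‖) (ρ : ℝ) : ∃ x : E, ‖x‖ = 1 ∧ ‖T x - ρ • x‖ ≤ |t - ρ| + r⁻¹ := by
  obtain ⟨y, hy, hRy⟩ := R.exists_lt_apply_of_lt_opNorm hrR
  set z := R y
  have hz : 0 < ‖z‖ := hr.trans hRy
  have hTz : T z = t • z - y := by
    have := congr($hR y)
    simp only [Algebra.algebraMap_eq_smul_one, mul_apply_eq_comp, sub_apply, smul_apply,
      one_apply_eq_self] at this
    rw [← this, sub_sub_cancel]
  refine ⟨‖z‖⁻¹ • z, by rw [norm_smul, norm_inv, norm_norm, inv_mul_cancel₀ hz.ne'], ?_⟩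
  have hsplit : T (‖z‖⁻¹ • z) - ρ • (‖z‖⁻¹ • z) = ‖z‖⁻¹ • ((t - ρ) • z - y) := by
    rw [map_smul, hTz]
    module
  calc ‖T (‖z‖⁻¹ • z) - ρ • (‖z‖⁻¹ • z)‖
      ≤ ‖z‖⁻¹ * (|t - ρ| * ‖z‖ + ‖y‖) := by
        rw [hsplit, norm_smul, norm_inv, norm_norm, ← Real.norm_eq_abs, ← norm_smul]
        gcongr
        exact norm_sub_le _ _
    _ = |t - ρ| + ‖y‖ / ‖z‖ := by field_simp
    _ ≤ |t - ρ| + r⁻¹ := by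
        gcongr
        simpa only [one_div] using div_le_div₀ zero_le_one hy.le hr hRy.le

section PositiveOperator

variable {X : Type*} [NormedAddCommGroup X] [NormedSpace ℝ X] [PartialOrder X]

/-- Positivity with respect to the order of `X`, not `ContinuousLinearMap.IsPositive`. -/
def IsPositiveOperator (S : X →L[ℝ] X) : Prop := ∀ x, 0 ≤ x → 0 ≤ S x

namespace IsPositiveOperator

variable {S R T B : X →L[ℝ] X}

theorem one : IsPositiveOperator (1 : X →L[ℝ] X) := fun _ hx => hx

theorem mul (hS : IsPositiveOperator S) (hR : IsPositiveOperator R) :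
    IsPositiveOperator (S * R) :=
  fun x hx => hS _ (hR x hx)

theorem pow (hS : IsPositiveOperator S) (n : ℕ) : IsPositiveOperator (S ^ n) := by
  induction n with
  | zero => exact one
  | succ n ih => exact pow_succ S n ▸ ih.mul hS

theorem smul [PosSMulMono ℝ X] (hS : IsPositiveOperator S) {c : ℝ} (hc : 0 ≤ c) :
    IsPositiveOperator (c • S) :=
  fun x hx => smul_nonneg hc (hS x hx)

variable [IsOrderedAddMonoid X]

theorem tsum [OrderClosedTopology X] {f : ℕ → X →L[ℝ] X} (hf : Summable f)
    (h : ∀ n, IsPositiveOperator (f n)) : IsPositiveOperator (∑' n, f n) := fun x hx =>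
  (hf.hasSum.mapL (ContinuousLinearMap.apply ℝ X x)).nonneg fun n => h n x hx

theorem monotone (hS : IsPositiveOperator S) : Monotone S := by
  intro a b hab
  simpa using hS (b - a) (sub_nonneg.mpr hab)

theorem resolvent_of_summable [PosSMulMono ℝ X] [OrderClosedTopology X]
    (hT : IsPositiveOperator T) {t : ℝ} (ht : 0 < t) (h : Summable fun n : ℕ => (t⁻¹ • T) ^ n) :
    IsPositiveOperator (resolvent T t) := by
  rw [resolvent_eq_smul_tsum_pow ht.ne' h]
  exact (tsum h fun n => ((hT.smul (inv_nonneg.mpr ht.le)).pow n)).smul (inv_nonneg.mpr ht.le)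

theorem pow_apply_le_of_algebraMap_sub_mul_eq_one [PosSMulMono ℝ X] (hT : IsPositiveOperator T)
    (hB : IsPositiveOperator B) {μ : ℝ} (hμ : 0 ≤ μ)
    (hTB : (algebraMap ℝ (X →L[ℝ] X) μ - T) * B = 1) (n : ℕ) {x : X} (hx : 0 ≤ x) :
    (T ^ n) x ≤ μ ^ (n + 1) • B x := by
  have hBx : ∀ x, μ • B x = x + T (B x) := fun x => by
    have := congr($hTB x)
    simp only [Algebra.algebraMap_eq_smul_one, mul_apply_eq_comp, sub_apply, smul_apply,
      one_apply_eq_self] at this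
    exact eq_add_of_sub_eq this
  induction n with
  | zero => simpa [hBx x] using hT _ (hB x hx)
  | succ n ih =>
    calc (T ^ (n + 1)) x = T ((T ^ n) x) := by rw [pow_succ', mul_apply_eq_comp]
      _ ≤ μ ^ (n + 1) • T (B x) := by rw [← map_smul]; exact hT.monotone ih
      _ ≤ μ ^ (n + 1) • (μ • B x) := by
        gcongr
        rw [hBx x]
        exact le_add_of_nonneg_left hx
      _ = μ ^ (n + 2) • B x := by rw [smul_smul, ← pow_succ]

end IsPositiveOperator

end PositiveOperator

section BanachLattice

variable {X : Type*} [NormedAddCommGroup X] [NormedSpace ℝ X] [Lattice X] [IsOrderedAddMonoid X]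
  [HasSolidNorm X] {S R T B : X →L[ℝ] X}

theorem IsPositiveOperator.norm_le_of_le (hS : IsPositiveOperator S) (hR : IsPositiveOperator R)
    (h : ∀ x, 0 ≤ x → S x ≤ R x) : ‖S‖ ≤ ‖R‖ := by
  refine S.opNorm_le_bound (norm_nonneg R) fun x => ?_
  have hSx : |S x| ≤ |R (|x|)| := by
    rw [abs_of_nonneg (hR _ (abs_nonneg x))]
    refine abs_le'.mpr ⟨?_, ?_⟩
    · exact (hS.monotone (le_abs_self x)).trans (h _ (abs_nonneg x))
    · rw [← map_neg]
      exact (hS.monotone (neg_le_abs x)).trans (h _ (abs_nonneg x))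
  calc ‖S x‖ ≤ ‖R |x|‖ := norm_le_norm_of_abs_le_abs hSx
    _ ≤ ‖R‖ * ‖|x|‖ := R.le_opNorm _
    _ = ‖R‖ * ‖x‖ := by rw [norm_abs_eq_norm]

variable [PosSMulMono ℝ X]

theorem IsPositiveOperator.le_of_algebraMap_sub_mul_eq_one (hT : IsPositiveOperator T)
    (hB : IsPositiveOperator B) {ρ μ : ℝ} (hμ : 0 < μ)
    (hTB : (algebraMap ℝ (X →L[ℝ] X) μ - T) * B = 1)
    (hlow : ∀ n : ℕ, ρ ^ n ≤ ‖T ^ n‖) : ρ ≤ μ := by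
  refine le_of_forall_pow_le_mul_pow hμ (C := μ * ‖B‖) fun n => (hlow n).trans ?_
  calc ‖T ^ n‖ ≤ ‖μ ^ (n + 1) • B‖ :=
        (hT.pow n).norm_le_of_le (hB.smul (by positivity))
          fun x hx => hT.pow_apply_le_of_algebraMap_sub_mul_eq_one hB hμ.le hTB n hx
    _ = μ * ‖B‖ * μ ^ n := by
        rw [norm_smul, Real.norm_of_nonneg (by positivity), pow_succ]
        ring

theorem IsPositiveOperator.inv_sub_le_norm_resolvent [CompleteSpace X] (hT : IsPositiveOperator T)
    {ρ t : ℝ} (hρ : 0 < ρ) (hlow : ∀ n : ℕ, ρ ^ n ≤ ‖T ^ n‖)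
    (hlim : Tendsto (fun n : ℕ => ‖T ^ n‖ ^ (1 / (n : ℝ))) atTop (𝓝 ρ)) (hρt : ρ < t) :
    (t - ρ)⁻¹ ≤ ‖resolvent T t‖ := by
  have ht : 0 < t := hρ.trans hρt
  have hsum := summable_pow_inv_smul_of_tendsto hlim hρt
  set R := resolvent T t
  have hR : IsPositiveOperator R := hT.resolvent_of_summable ht hsum
  by_contra! hnorm
  have htρ : 0 < t - ρ := sub_pos.mpr hρt
  obtain ⟨c, hc, hcρ⟩ := exists_between (max_lt hnorm (inv_strictAnti₀ htρ (sub_lt_self t hρ)))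
  have hc₀ : 0 < c := (inv_pos.mpr ht).trans_le (le_max_right _ _) |>.trans hc
  have hδR : ‖c⁻¹ • R‖ < 1 := by
    rw [norm_smul, norm_inv, Real.norm_of_nonneg hc₀.le, inv_mul_lt_one₀ hc₀]
    exact (le_max_left _ _).trans_lt hc
  have hμ : 0 < t - c⁻¹ := sub_pos.mpr (inv_lt_of_inv_lt₀ ht ((le_max_right _ _).trans_lt hc))
  have hB : IsPositiveOperator (R * ∑' n : ℕ, (c⁻¹ • R) ^ n) :=
    hR.mul (IsPositiveOperator.tsum (summable_geometric_of_norm_lt_one hδR)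
      fun n => (hR.smul (inv_nonneg.mpr hc₀.le)).pow n)
  have hle := hT.le_of_algebraMap_sub_mul_eq_one hB hμ
    (algebraMap_sub_mul_mul_tsum_pow (algebraMap_sub_mul_resolvent ht.ne' hsum) hδR) hlow
  linarith [(lt_inv_comm₀ hc₀ htρ).mp hcρ]

theorem IsPositiveOperator.exists_norm_eq_one_and_norm_sub_smul_le [CompleteSpace X]
    (hT : IsPositiveOperator T) {ρ : ℝ} (hρ : 0 < ρ) (hlow : ∀ n : ℕ, ρ ^ n ≤ ‖T ^ n‖)
    (hlim : Tendsto (fun n : ℕ => ‖T ^ n‖ ^ (1 / (n : ℝ))) atTop (𝓝 ρ)) {ε : ℝ} (hε : 0 < ε) :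
    ∃ x : X, ‖x‖ = 1 ∧ ‖T x - ρ • x‖ ≤ ε := by
  have hρt : ρ < ρ + ε / 3 := by linarith
  have hR : 3 / (2 * ε) < ‖resolvent T (ρ + ε / 3)‖ := by
    refine lt_of_lt_of_le ?_ (hT.inv_sub_le_norm_resolvent hρ hlow hlim hρt)
    rw [add_sub_cancel_left, inv_div]
    gcongr
    linarith
  have hsum : Summable fun n : ℕ => ((ρ + ε / 3)⁻¹ • T) ^ n :=
    summable_pow_inv_smul_of_tendsto hlim hρt
  have hinv := algebraMap_sub_mul_resolvent (by positivity) hsum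
  obtain ⟨x, hx, hTx⟩ := _root_.exists_norm_eq_one_and_norm_sub_smul_le hinv
    (by positivity) hR ρ
  refine ⟨x, hx, hTx.trans_eq ?_⟩
  rw [add_sub_cancel_left, abs_of_pos (by positivity), inv_div]
  ring

end BanachLattice

theorem stmt6_general {X : Type*} [NormedAddCommGroup X] [Lattice X] [HasSolidNorm X]
    [IsOrderedAddMonoid X] [NormedSpace ℝ X]
    [PosSMulStrictMono ℝ X] [CompleteSpace X]
    (T : X →L[ℝ] X) (hT : ∀ x : X, 0 ≤ x → 0 ≤ T x)
    (ρ : ℝ) (hρ : 0 < ρ)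
    (hlow : ∀ n : ℕ, ρ ^ n ≤ ‖(T ^ n : X →L[ℝ] X)‖)
    (hlim : Tendsto (fun n : ℕ => ‖(T ^ n : X →L[ℝ] X)‖ ^ (1 / (n : ℝ))) atTop (nhds ρ)) :
    ∃ x : ℕ → X, (∀ j, ‖x j‖ = 1) ∧
      Tendsto (fun j => ‖T (x j) - ρ • x j‖) atTop (nhds 0) := by
  choose x hx hTx using fun j : ℕ =>
    IsPositiveOperator.exists_norm_eq_one_and_norm_sub_smul_le hT hρ hlow hlim
      (Nat.one_div_pos_of_nat (n := j))
  exact ⟨x, hx, squeeze_zero (fun j => norm_nonneg _) hTx tendsto_one_div_add_atTop_nhds_zero_nat⟩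

theorem stmt6 {X : Type*} [NormedAddCommGroup X] [Lattice X] [HasSolidNorm X]
    [IsOrderedAddMonoid X] [NormedSpace ℝ X]
    [PosSMulStrictMono ℝ X] [PosSMulReflectLT ℝ X] [CompleteSpace X]
    (T : X →L[ℝ] X) (hT : ∀ x : X, 0 ≤ x → 0 ≤ T x)
    (ρ : ℝ) (hρ : 0 < ρ)
    (hlow : ∀ n : ℕ, ρ ^ n ≤ ‖(T ^ n : X →L[ℝ] X)‖)
    (hlim : Tendsto (fun n : ℕ => ‖(T ^ n : X →L[ℝ] X)‖ ^ (1 / (n : ℝ))) atTop (nhds ρ)) :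
    ∃ x : ℕ → X, (∀ j, ‖x j‖ = 1) ∧
      Tendsto (fun j => ‖T (x j) - ρ • x j‖) atTop (nhds 0) :=
  stmt6_general T hT ρ hρ hlow hlim
end

section
/- Let X be a real Banach lattice and T : X → X a positive invertible bounded linear operator whose inverse T^{-1} is also positive. Let ρ > 0 and suppose that ρ^{-n} ≤ ‖T^{-n}‖ for every n ∈ ℕ and that ‖T^{-n}‖^{1/n} → ρ^{-1} as n → ∞. Then ρ is an approximate eigenvalue of T: there exists a sequence (f_j) in X with ‖f_j‖ = 1 and ‖T f_j − ρ·f_j‖ → 0. -/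
/-!
Write `S = T⁻¹` and `μ = ρ⁻¹`. For `r > μ` the Neumann series `R(r) = ∑ r^{-(n+1)} Sⁿ` converges
(root test) to the resolvent `(r - S)⁻¹`, which is positive since `S` is. If `S - μ` were bounded
below by `ε`, the resolvent identity would give `‖R(r)‖ ≤ 2/ε` for `r - μ ≤ ε/2`. Positivity of
`R(r)² = ∑ (n+1) r^{-(n+2)} Sⁿ` bounds its single term `(N+1) r^{-(N+2)} S^N` in norm by `‖R(r)‖²`.
Taking `r = μ (1 + 1/(N+2))`, so that `r^{N+2} ≤ e μ^{N+2}`, this gives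
`μ^N ≤ ‖S^N‖ ≤ 4 e μ^{N+2} / (ε² (N+1))`, which fails for large `N`. Hence `μ` is an approximate
eigenvalue of `S`, and then `ρ = μ⁻¹` is one of `T`.
-/

open Filter Topology

lemma eventually_le_pow_of_tendsto_rpow_one_div_s7 {a : ℕ → ℝ} {L q : ℝ} (ha : ∀ n, 0 ≤ a n)
    (hlim : Tendsto (fun n : ℕ => a n ^ (1 / (n : ℝ))) atTop (𝓝 L)) (hq : L < q) :
    ∀ᶠ n in atTop, a n ≤ q ^ n := by
  filter_upwards [hlim.eventually_lt_const hq, eventually_ge_atTop 1] with n hn hn1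
  have hn0 : (n : ℝ) ≠ 0 := Nat.cast_ne_zero.2 (by omega)
  calc a n = (a n ^ (1 / (n : ℝ))) ^ n := by
        rw [← Real.rpow_natCast, ← Real.rpow_mul (ha n), one_div_mul_cancel hn0, Real.rpow_one]
    _ ≤ q ^ n := pow_le_pow_left₀ (Real.rpow_nonneg (ha n) _) hn.le n

lemma summable_inv_pow_succ_smul_pow {A : Type*} [NormedRing A] [NormedAlgebra ℝ A]
    [CompleteSpace A] {S : A} {μ r : ℝ}
    (hlim : Tendsto (fun n : ℕ => ‖S ^ n‖ ^ (1 / (n : ℝ))) atTop (𝓝 μ)) (hμr : μ < r) :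
    Summable fun n : ℕ => (r ^ (n + 1))⁻¹ • S ^ n := by
  obtain ⟨q, hμq, hqr⟩ := exists_between hμr
  have hμ : 0 ≤ μ := ge_of_tendsto' hlim fun n => by positivity
  have hr : 0 < r := by linarith
  have hgeom : Summable fun n : ℕ => (q / r) ^ n * r⁻¹ :=
    (summable_geometric_of_lt_one (div_nonneg (hμ.trans hμq.le) hr.le)
      ((div_lt_one hr).2 hqr)).mul_right _
  refine Summable.of_norm_bounded_eventually_nat hgeom ?_
  filter_upwards [eventually_le_pow_of_tendsto_rpow_one_div_s7 (fun n => norm_nonneg _) hlim hμq]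
    with n hn
  rw [norm_smul, norm_inv, norm_pow, Real.norm_of_nonneg hr.le]
  calc (r ^ (n + 1))⁻¹ * ‖S ^ n‖ ≤ (r ^ (n + 1))⁻¹ * q ^ n := by gcongr
    _ = (q / r) ^ n * r⁻¹ := by rw [div_pow, pow_succ]; field_simp

lemma mul_norm_le_norm_apply_of_forall_norm_eq_one {E F : Type*} [NormedAddCommGroup E]
    [NormedSpace ℝ E] [NormedAddCommGroup F] [NormedSpace ℝ F] (A : E →L[ℝ] F) {ε : ℝ}
    (h : ∀ x, ‖x‖ = 1 → ε ≤ ‖A x‖) (y : E) : ε * ‖y‖ ≤ ‖A y‖ := by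
  rcases eq_or_ne y 0 with rfl | hy
  · simp
  have hy' : ‖y‖ ≠ 0 := norm_ne_zero_iff.2 hy
  have hunit := h (‖y‖⁻¹ • y) (by rw [norm_smul, norm_inv, norm_norm, inv_mul_cancel₀ hy'])
  rw [map_smul, norm_smul, norm_inv, norm_norm] at hunit
  rwa [le_inv_mul_iff₀ (norm_pos_iff.2 hy), mul_comm] at hunit

section ApproxEigenvalue

variable {𝕜 E : Type*} [NontriviallyNormedField 𝕜] [NormedAddCommGroup E] [NormedSpace 𝕜 E]

def IsApproxEigenvalue (A : E → E) (c : 𝕜) : Prop :=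
  ∃ f : ℕ → E, (∀ j, ‖f j‖ = 1) ∧ Tendsto (fun j => ‖A (f j) - c • f j‖) atTop (𝓝 0)

lemma isApproxEigenvalue_of_forall_exists_norm_sub_smul_lt {A : E → E} {c : 𝕜}
    (h : ∀ ε > 0, ∃ x, ‖x‖ = 1 ∧ ‖A x - c • x‖ < ε) : IsApproxEigenvalue A c := by
  choose f hf1 hf2 using fun j : ℕ => h (1 / (j + 1)) Nat.one_div_pos_of_nat
  exact ⟨f, hf1, squeeze_zero (fun _ => norm_nonneg _) (fun j => (hf2 j).le)
    tendsto_one_div_add_atTop_nhds_zero_nat⟩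

lemma IsApproxEigenvalue.inv_of_symm {T : E ≃L[𝕜] E} {c : 𝕜} (hc : c ≠ 0)
    (h : IsApproxEigenvalue T.symm c) : IsApproxEigenvalue T c⁻¹ := by
  obtain ⟨f, hf1, hf⟩ := h
  refine ⟨f, hf1, squeeze_zero (fun _ => norm_nonneg _) (fun j => ?_)
    (by simpa using hf.const_mul (‖c‖⁻¹ * ‖(T : E →L[𝕜] E)‖))⟩
  have hT : T (f j) - c⁻¹ • f j = -(c⁻¹ • T (T.symm (f j) - c • f j)) := by
    rw [map_sub, map_smul, T.apply_symm_apply, smul_sub, smul_smul, inv_mul_cancel₀ hc, one_smul]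
    abel
  rw [hT, norm_neg, norm_smul, norm_inv, mul_assoc]
  gcongr
  exact (T : E →L[𝕜] E).le_opNorm _

end ApproxEigenvalue

lemma Monotone.continuousLinearMap_pow {R M : Type*} [Semiring R] [TopologicalSpace M]
    [AddCommMonoid M] [Module R M] [Preorder M] {A : M →L[R] M} (hA : Monotone A) (n : ℕ) :
    Monotone (A ^ n) := by
  induction n with
  | zero => exact monotone_id
  | succ n ih => rw [pow_succ]; exact ih.comp hA

lemma Monotone.continuousLinearMap_map_nonneg {R M : Type*} [Semiring R] [TopologicalSpace M]
    [AddCommMonoid M] [Module R M] [Preorder M] {A : M →L[R] M} (hA : Monotone A) {x : M}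
    (hx : 0 ≤ x) : 0 ≤ A x :=
  map_zero A ▸ hA hx

lemma norm_le_norm_of_nonneg_of_le {α : Type*} [NormedAddCommGroup α] [Lattice α]
    [IsOrderedAddMonoid α] [HasSolidNorm α] {a b : α} (ha : 0 ≤ a) (hab : a ≤ b) : ‖a‖ ≤ ‖b‖ :=
  norm_le_norm_of_abs_le_abs <| by rwa [abs_of_nonneg ha, abs_of_nonneg (ha.trans hab)]

section PositiveOperator

variable {X : Type*} [NormedAddCommGroup X] [Lattice X] [IsOrderedAddMonoid X] [HasSolidNorm X]
  [NormedSpace ℝ X]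

lemma norm_apply_le_norm_apply_abs {A : X →L[ℝ] X} (hA : Monotone A) (y : X) :
    ‖A y‖ ≤ ‖A |y|‖ := by
  apply norm_le_norm_of_abs_le_abs
  rw [abs_of_nonneg (hA.continuousLinearMap_map_nonneg (abs_nonneg y)), abs_le']
  exact ⟨hA (le_abs_self y), by simpa using hA (neg_le_abs y)⟩

lemma opNorm_le_of_forall_nonneg {A : X →L[ℝ] X} (hA : Monotone A) {C : ℝ} (hC : 0 ≤ C)
    (h : ∀ x, 0 ≤ x → ‖A x‖ ≤ C * ‖x‖) : ‖A‖ ≤ C :=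
  A.opNorm_le_bound hC fun y =>
    (norm_apply_le_norm_apply_abs hA y).trans <| by
      simpa [norm_abs_eq_norm] using h |y| (abs_nonneg y)

end PositiveOperator

section NeumannResolvent

variable {X : Type*} [NormedAddCommGroup X] [NormedSpace ℝ X]

noncomputable def neumannResolvent (S : X →L[ℝ] X) (r : ℝ) : X →L[ℝ] X :=
  ∑' n : ℕ, (r ^ (n + 1))⁻¹ • S ^ n

variable {S : X →L[ℝ] X} {r : ℝ}

lemma hasSum_neumannResolvent (hs : Summable fun n : ℕ => (r ^ (n + 1))⁻¹ • S ^ n) :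
    HasSum (fun n : ℕ => (r ^ (n + 1))⁻¹ • S ^ n) (neumannResolvent S r) :=
  hs.hasSum

lemma hasSum_neumannResolvent_apply (hs : Summable fun n : ℕ => (r ^ (n + 1))⁻¹ • S ^ n)
    (x : X) : HasSum (fun n : ℕ => (r ^ (n + 1))⁻¹ • (S ^ n) x) (neumannResolvent S r x) :=
  (hasSum_neumannResolvent hs).mapL (ContinuousLinearMap.apply ℝ X x)

lemma mul_neumannResolvent (hs : Summable fun n : ℕ => (r ^ (n + 1))⁻¹ • S ^ n) (hr : r ≠ 0) :
    S * neumannResolvent S r = r • neumannResolvent S r - 1 := by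
  have hS : HasSum (fun n : ℕ => (r ^ (n + 1))⁻¹ • S ^ (n + 1)) (S * neumannResolvent S r) := by
    simpa only [mul_smul_comm, ← pow_succ'] using (hasSum_neumannResolvent hs).mul_left S
  have hr : HasSum (fun n : ℕ => (r ^ n)⁻¹ • S ^ n) (r • neumannResolvent S r) := by
    convert (hasSum_neumannResolvent hs).const_smul r using 2 with n
    rw [smul_smul, pow_succ, mul_inv, mul_left_comm, mul_inv_cancel₀ hr, mul_one]
  rw [← hasSum_nat_add_iff' 1] at hr
  simpa using hS.unique hr

lemma apply_neumannResolvent (hs : Summable fun n : ℕ => (r ^ (n + 1))⁻¹ • S ^ n) (hr : r ≠ 0)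
    (x : X) : S (neumannResolvent S r x) = r • neumannResolvent S r x - x := by
  simpa using congrArg (· x) (mul_neumannResolvent hs hr)

lemma norm_neumannResolvent_le (hs : Summable fun n : ℕ => (r ^ (n + 1))⁻¹ • S ^ n)
    (hr : r ≠ 0) {μ ε : ℝ} (hbelow : ∀ y, ε * ‖y‖ ≤ ‖S y - μ • y‖) (hμr : μ ≤ r)
    (hrε : r - μ < ε) : ‖neumannResolvent S r‖ ≤ (ε - (r - μ))⁻¹ := by
  have hgap : 0 < ε - (r - μ) := by linarith
  refine (neumannResolvent S r).opNorm_le_bound (by positivity) fun x => ?_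
  set y := neumannResolvent S r x
  have hSy : S y = r • y - x := apply_neumannResolvent hs hr x
  have hy : ε * ‖y‖ ≤ (r - μ) * ‖y‖ + ‖x‖ :=
    calc ε * ‖y‖ ≤ ‖S y - μ • y‖ := hbelow y
      _ = ‖(r - μ) • y - x‖ := by rw [hSy, sub_smul, sub_right_comm]
      _ ≤ ‖(r - μ) • y‖ + ‖x‖ := norm_sub_le _ _
      _ = (r - μ) * ‖y‖ + ‖x‖ := by rw [norm_smul, Real.norm_of_nonneg (by linarith)]
  rw [le_inv_mul_iff₀ hgap]
  linarith

end NeumannResolvent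

section PositiveNeumannResolvent

variable {X : Type*} [NormedAddCommGroup X] [Lattice X] [IsOrderedAddMonoid X] [HasSolidNorm X]
  [NormedSpace ℝ X] [PosSMulMono ℝ X] {S : X →L[ℝ] X} {r : ℝ}

lemma monotone_neumannResolvent (hs : Summable fun n : ℕ => (r ^ (n + 1))⁻¹ • S ^ n)
    (hS : Monotone S) (hr : 0 < r) : Monotone (neumannResolvent S r) :=
  (monotone_iff_map_nonneg _).2 fun x hx => (hasSum_neumannResolvent_apply hs x).nonneg fun n =>
    smul_nonneg (by positivity) ((hS.continuousLinearMap_pow n).continuousLinearMap_map_nonneg hx)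

lemma smul_pow_apply_le_neumannResolvent_sq (hs : Summable fun n : ℕ => (r ^ (n + 1))⁻¹ • S ^ n)
    (hS : Monotone S) (hr : 0 < r) {x : X} (hx : 0 ≤ x) (N : ℕ) :
    (((N : ℝ) + 1) * (r ^ (N + 2))⁻¹) • (S ^ N) x ≤
      neumannResolvent S r (neumannResolvent S r x) := by
  have hSn (n : ℕ) {y : X} (hy : 0 ≤ y) : 0 ≤ (S ^ n) y :=
    (hS.continuousLinearMap_pow n).continuousLinearMap_map_nonneg hy
  have hterm (n : ℕ) (hn : n ≤ N) :
      (r ^ (N + 2))⁻¹ • (S ^ N) x ≤ (r ^ (n + 1))⁻¹ • (S ^ n) (neumannResolvent S r x) := by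
    have hle : (r ^ (N - n + 1))⁻¹ • (S ^ (N - n)) x ≤ neumannResolvent S r x :=
      le_hasSum (hasSum_neumannResolvent_apply hs x) (N - n) fun j _ =>
        smul_nonneg (by positivity) (hSn j hx)
    calc (r ^ (N + 2))⁻¹ • (S ^ N) x
        = (r ^ (n + 1))⁻¹ • (S ^ n) ((r ^ (N - n + 1))⁻¹ • (S ^ (N - n)) x) := by
          rw [map_smul, smul_smul, ← mul_apply_eq_comp, ← pow_add, ← mul_inv,
            ← pow_add, Nat.add_sub_cancel' hn, show n + 1 + (N - n + 1) = N + 2 by omega]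
      _ ≤ _ := smul_le_smul_of_nonneg_left (hS.continuousLinearMap_pow n hle) (by positivity)
  calc (((N : ℝ) + 1) * (r ^ (N + 2))⁻¹) • (S ^ N) x
      = ∑ n ∈ Finset.range (N + 1), (r ^ (N + 2))⁻¹ • (S ^ N) x := by
        rw [Finset.sum_const, Finset.card_range, mul_smul, ← Nat.cast_smul_eq_nsmul ℝ,
          Nat.cast_succ]
    _ ≤ ∑ n ∈ Finset.range (N + 1), (r ^ (n + 1))⁻¹ • (S ^ n) (neumannResolvent S r x) :=
        Finset.sum_le_sum fun n hn => hterm n (Nat.lt_succ_iff.1 (Finset.mem_range.1 hn))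
    _ ≤ _ := sum_le_hasSum _ (fun n _ => smul_nonneg (by positivity)
        (hSn n ((monotone_neumannResolvent hs hS hr).continuousLinearMap_map_nonneg hx)))
        (hasSum_neumannResolvent_apply hs _)

lemma norm_pow_le_of_neumannResolvent (hs : Summable fun n : ℕ => (r ^ (n + 1))⁻¹ • S ^ n)
    (hS : Monotone S) (hr : 0 < r) (N : ℕ) :
    ‖S ^ N‖ ≤ r ^ (N + 2) * ‖neumannResolvent S r‖ ^ 2 / (N + 1) := by
  set R := neumannResolvent S r
  refine opNorm_le_of_forall_nonneg (hS.continuousLinearMap_pow N) (by positivity) fun x hx => ?_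
  have hcoeff : 0 ≤ ((N : ℝ) + 1) * (r ^ (N + 2))⁻¹ := by positivity
  have hlow : ((N : ℝ) + 1) * (r ^ (N + 2))⁻¹ * ‖(S ^ N) x‖ ≤ ‖R (R x)‖ := by
    have h := norm_le_norm_of_nonneg_of_le
      (smul_nonneg hcoeff ((hS.continuousLinearMap_pow N).continuousLinearMap_map_nonneg hx))
      (smul_pow_apply_le_neumannResolvent_sq hs hS hr hx N)
    rwa [norm_smul, Real.norm_of_nonneg hcoeff] at h
  have hup : ‖R (R x)‖ ≤ ‖R‖ ^ 2 * ‖x‖ :=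
    calc ‖R (R x)‖ ≤ ‖R‖ * ‖R x‖ := R.le_opNorm _
      _ ≤ ‖R‖ * (‖R‖ * ‖x‖) := by gcongr; exact R.le_opNorm x
      _ = ‖R‖ ^ 2 * ‖x‖ := by ring
  calc ‖(S ^ N) x‖
      = r ^ (N + 2) / (N + 1) * (((N : ℝ) + 1) * (r ^ (N + 2))⁻¹ * ‖(S ^ N) x‖) := by
        field_simp
    _ ≤ r ^ (N + 2) / (N + 1) * (‖R‖ ^ 2 * ‖x‖) :=
        mul_le_mul_of_nonneg_left (hlow.trans hup) (by positivity)
    _ = r ^ (N + 2) * ‖R‖ ^ 2 / (N + 1) * ‖x‖ := by ring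

theorem exists_norm_sub_smul_lt_of_pow_le_norm_pow (hS : Monotone S) {μ : ℝ} (hμ : 0 < μ)
    (hlow : ∀ n : ℕ, μ ^ n ≤ ‖S ^ n‖)
    (hsum : ∀ r, μ < r → Summable fun n : ℕ => (r ^ (n + 1))⁻¹ • S ^ n) {ε : ℝ} (hε : 0 < ε) :
    ∃ x : X, ‖x‖ = 1 ∧ ‖S x - μ • x‖ < ε := by
  by_contra! hfar
  have hA (x : X) : (S - μ • 1) x = S x - μ • x := by simp
  have hbelow (y : X) : ε * ‖y‖ ≤ ‖S y - μ • y‖ := by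
    have h := mul_norm_le_norm_apply_of_forall_norm_eq_one (S - μ • 1)
      (fun x hx => by simpa only [hA] using hfar x hx) y
    rwa [hA] at h
  set C := μ ^ 2 * Real.exp 1 * (2 / ε) ^ 2
  obtain ⟨N, hN⟩ := exists_nat_gt (max (2 * μ / ε) C)
  obtain ⟨hNμ, hNC⟩ := max_lt_iff.1 hN
  have hN2 : (0 : ℝ) < ((N + 2 : ℕ) : ℝ) := by positivity
  set r := μ * (1 + ((N + 2 : ℕ) : ℝ)⁻¹)
  have hμr : μ < r := lt_mul_of_one_lt_right hμ (by simpa using hN2)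
  have hr : 0 < r := hμ.trans hμr
  have hrμ : r - μ ≤ ε / 2 := by
    rw [show r - μ = μ / ((N + 2 : ℕ) : ℝ) by ring, div_le_iff₀ hN2]
    rw [div_lt_iff₀ hε] at hNμ
    push_cast
    linarith
  have hR : ‖neumannResolvent S r‖ ≤ 2 / ε :=
    calc ‖neumannResolvent S r‖ ≤ (ε - (r - μ))⁻¹ :=
          norm_neumannResolvent_le (hsum r hμr) hr.ne' hbelow hμr.le (by linarith)
      _ ≤ (ε / 2)⁻¹ := inv_anti₀ (by positivity) (by linarith)
      _ = 2 / ε := inv_div ε 2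
  have hexp : r ^ (N + 2) ≤ μ ^ (N + 2) * Real.exp 1 := by
    rw [mul_pow]
    gcongr
    exact Real.one_add_inv_pow_le_exp
  have hgrowth : μ ^ N * 1 ≤ μ ^ N * (C / (N + 1)) :=
    calc μ ^ N * 1 ≤ ‖S ^ N‖ := by rw [mul_one]; exact hlow N
      _ ≤ r ^ (N + 2) * ‖neumannResolvent S r‖ ^ 2 / (N + 1) :=
          norm_pow_le_of_neumannResolvent (hsum r hμr) hS hr N
      _ ≤ μ ^ (N + 2) * Real.exp 1 * (2 / ε) ^ 2 / (N + 1) := by gcongr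
      _ = μ ^ N * (C / (N + 1)) := by ring
  have hNC' := (one_le_div (by positivity : (0 : ℝ) < N + 1)).1
    (le_of_mul_le_mul_left hgrowth (by positivity))
  linarith

end PositiveNeumannResolvent

theorem stmt7_general {X : Type*} [NormedAddCommGroup X] [Lattice X] [IsOrderedAddMonoid X]
    [HasSolidNorm X] [NormedSpace ℝ X]
    [PosSMulStrictMono ℝ X] [CompleteSpace X]
    (T : X ≃L[ℝ] X)
    (hTinv : ∀ x : X, 0 ≤ x → 0 ≤ T.symm x)
    (ρ : ℝ) (hρ : 0 < ρ)
    (hlow : ∀ n : ℕ, ρ ^ (-(n : ℤ)) ≤ ‖((T.symm : X →L[ℝ] X)) ^ n‖)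
    (hlim : Tendsto (fun n : ℕ => ‖((T.symm : X →L[ℝ] X)) ^ n‖ ^ (1 / (n : ℝ))) atTop
      (nhds ρ⁻¹)) :
    ∃ f : ℕ → X, (∀ j, ‖f j‖ = 1) ∧
      Tendsto (fun j => ‖T (f j) - ρ • f j‖) atTop (nhds 0) := by
  have hS : Monotone (T.symm : X →L[ℝ] X) := (monotone_iff_map_nonneg _).2 hTinv
  have hlow' (n : ℕ) : ρ⁻¹ ^ n ≤ ‖(T.symm : X →L[ℝ] X) ^ n‖ := by
    simpa [zpow_neg, inv_pow] using hlow n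
  have hS_approx : IsApproxEigenvalue T.symm ρ⁻¹ :=
    isApproxEigenvalue_of_forall_exists_norm_sub_smul_lt fun ε hε =>
      exists_norm_sub_smul_lt_of_pow_le_norm_pow hS (inv_pos.2 hρ) hlow'
        (fun _ hr => summable_inv_pow_succ_smul_pow hlim hr) hε
  have hT_approx := hS_approx.inv_of_symm (inv_ne_zero hρ.ne')
  rw [inv_inv] at hT_approx
  exact hT_approx

theorem stmt7 {X : Type*} [NormedAddCommGroup X] [Lattice X] [IsOrderedAddMonoid X]
    [HasSolidNorm X] [NormedSpace ℝ X]
    [PosSMulStrictMono ℝ X] [CompleteSpace X]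
    (T : X ≃L[ℝ] X) (hT : ∀ x : X, 0 ≤ x → 0 ≤ T x)
    (hTinv : ∀ x : X, 0 ≤ x → 0 ≤ T.symm x)
    (ρ : ℝ) (hρ : 0 < ρ)
    (hlow : ∀ n : ℕ, ρ ^ (-(n : ℤ)) ≤ ‖((T.symm : X →L[ℝ] X)) ^ n‖)
    (hlim : Tendsto (fun n : ℕ => ‖((T.symm : X →L[ℝ] X)) ^ n‖ ^ (1 / (n : ℝ))) atTop
      (nhds ρ⁻¹)) :
    ∃ f : ℕ → X, (∀ j, ‖f j‖ = 1) ∧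
      Tendsto (fun j => ‖T (f j) - ρ • f j‖) atTop (nhds 0) :=
  stmt7_general T hTinv ρ hρ hlow hlim
end

section
/- In the setting of the context, for every real λ with 1/K₋ < λ < K₊, the operator T − λ·I is not bounded below on ℓ^q: there is no constant c > 0 such that c·‖a‖ ≤ ‖T a − λ·a‖ for all a ∈ ℓ^q. -/
open Filter

set_option maxHeartbeats 2000000 in
theorem stmt9 (q : ℝ) (hq : 1 ≤ q) [Fact (1 ≤ ENNReal.ofReal q)]
    (μ : ℕ → ℝ) (hμ : ∀ k, 0 < μ k)
    (M : ℝ) (hM : 1 ≤ M)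
    (hM1 : ∀ k, μ k ≤ M * μ (k + 1)) (hM2 : ∀ k, μ (k + 1) ≤ M * μ k)
    (T : lp (fun _ : ℕ => ℝ) (ENNReal.ofReal q) →L[ℝ] lp (fun _ : ℕ => ℝ) (ENNReal.ofReal q))
    (hT0 : ∀ a, (T a : ∀ _ : ℕ, ℝ) 0 = 0)
    (hTk : ∀ a (k : ℕ), (T a : ∀ _ : ℕ, ℝ) (k + 1) = (μ (k + 1) / μ k) * (a : ∀ _ : ℕ, ℝ) k)
    (hbddR : ∀ n : ℕ, BddAbove (Set.range fun k => μ (k + n) / μ k))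
    (hbddL : ∀ n : ℕ, BddAbove (Set.range fun k => μ k / μ (k + n)))
    (Kp Km : ℝ) (hKp : 0 < Kp) (hKm : 0 < Km)
    (hKplim : Tendsto (fun n : ℕ => (⨆ k : ℕ, μ (k + n) / μ k) ^ (1 / (n : ℝ))) atTop (nhds Kp))
    (hKmlim : Tendsto (fun n : ℕ => (⨆ k : ℕ, μ k / μ (k + n)) ^ (1 / (n : ℝ))) atTop (nhds Km))
    (lam : ℝ) (hlam1 : 1 / Km < lam) (hlam2 : lam < Kp) :
    ¬ ∃ c : ℝ, 0 < c ∧ ∀ a, c * ‖a‖ ≤ ‖T a - lam • a‖ := by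
  classical
  rintro ⟨c, hc, hle⟩
  have hq0 : (0:ℝ) < q := lt_of_lt_of_le one_pos hq
  have hpt : (ENNReal.ofReal q).toReal = q := ENNReal.toReal_ofReal hq0.le
  have hKmi : (0:ℝ) < 1 / Km := by positivity
  have hlam0 : 0 < lam := lt_trans hKmi hlam1
  set b : ℕ → ℝ := fun k => (μ k / lam ^ k) ^ q with hbdef
  have hb : ∀ k, 0 < b k := fun k =>
    Real.rpow_pos_of_pos (div_pos (hμ k) (pow_pos hlam0 k)) q
  set C : ℝ := lam ^ q / c ^ q with hCdef
  have hlamq : (0:ℝ) < lam ^ q := Real.rpow_pos_of_pos hlam0 q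
  have hcq : (0:ℝ) < c ^ q := Real.rpow_pos_of_pos hc q
  have hC : 0 < C := by rw [hCdef]; positivity
  -- Key inequality from applying the bounded-below hypothesis to window vectors
  have key : ∀ m n : ℕ, m ≤ n →
      ∑ k ∈ Finset.Icc m n, b k ≤ C * (b m + b (n + 1)) := by
    intro m n hmn
    set f : ℕ → ℝ := fun k => if k ∈ Finset.Icc m n then μ k / lam ^ k else 0 with hfdef
    have hfz : ∀ k, k ∉ Finset.Icc m n → f k = 0 := fun k hk => if_neg hk
    have hnormf : ∀ k, ‖f k‖ ^ q = if k ∈ Finset.Icc m n then b k else 0 := by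
      intro k
      by_cases hk : k ∈ Finset.Icc m n
      · rw [if_pos hk]
        simp only [hfdef, if_pos hk, hbdef]
        rw [Real.norm_of_nonneg (div_pos (hμ k) (pow_pos hlam0 k)).le]
      · rw [if_neg hk]
        simp only [hfdef, if_neg hk, norm_zero]
        exact Real.zero_rpow (ne_of_gt hq0)
    have hmem : Memℓp f (ENNReal.ofReal q) := by
      apply memℓp_gen
      rw [hpt]
      apply summable_of_ne_finset_zero (s := Finset.Icc m n)
      intro k hk
      rw [hnormf k, if_neg hk]
    set a : lp (fun _ : ℕ => ℝ) (ENNReal.ofReal q) := ⟨f, hmem⟩ with hadef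
    have ha : ∀ k, (a : ∀ _ : ℕ, ℝ) k = f k := fun k => rfl
    have hna : ‖a‖ ^ q = ∑ k ∈ Finset.Icc m n, b k := by
      have h := lp.norm_rpow_eq_tsum (p := ENNReal.ofReal q) (by rw [hpt]; exact hq0) a
      rw [hpt] at h
      rw [h, tsum_eq_sum (s := Finset.Icc m n)
        (fun k hk => by rw [ha, hnormf k, if_neg hk])]
      exact Finset.sum_congr rfl fun k hk => by rw [ha, hnormf k, if_pos hk]
    set g := T a - lam • a with hgdef
    have hgc : ∀ j, (g : ∀ _ : ℕ, ℝ) j = (T a : ∀ _ : ℕ, ℝ) j - lam * f j := by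
      intro j
      rw [hgdef, lp.coeFn_sub, Pi.sub_apply, lp.coeFn_smul, Pi.smul_apply, smul_eq_mul, ha]
    have hg0 : ∀ j, j ∉ ({m, n + 1} : Finset ℕ) → (g : ∀ _ : ℕ, ℝ) j = 0 := by
      intro j hj
      simp only [Finset.mem_insert, Finset.mem_singleton, not_or] at hj
      obtain ⟨hjm, hjn⟩ := hj
      rw [hgc]
      cases j with
      | zero =>
        rw [hT0, hfz 0 (by simp only [Finset.mem_Icc]; omega), mul_zero, sub_zero]
      | succ k =>
        rw [hTk, ha]
        by_cases hk : k ∈ Finset.Icc m n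
        · have hk' : m ≤ k ∧ k ≤ n := Finset.mem_Icc.mp hk
          have hk1 : k + 1 ∈ Finset.Icc m n := by
            simp only [Finset.mem_Icc]; omega
          simp only [hfdef, if_pos hk, if_pos hk1]
          have h1 : μ k ≠ 0 := (hμ k).ne'
          have h2 : lam ≠ 0 := hlam0.ne'
          field_simp [pow_succ]
          ring
        · have hk1 : k + 1 ∉ Finset.Icc m n := by
            simp only [Finset.mem_Icc] at hk ⊢; omega
          rw [hfz k hk, hfz _ hk1, mul_zero, mul_zero, sub_zero]
    have hTam : (T a : ∀ _ : ℕ, ℝ) m = 0 := by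
      cases m with
      | zero => exact hT0 a
      | succ k =>
        rw [hTk, ha, hfz k (by simp only [Finset.mem_Icc]; omega), mul_zero]
    have hgm : (g : ∀ _ : ℕ, ℝ) m = -(lam * (μ m / lam ^ m)) := by
      rw [hgc, hTam, zero_sub]
      simp only [hfdef, if_pos (Finset.mem_Icc.mpr ⟨le_refl m, hmn⟩)]
    have hgn1 : (g : ∀ _ : ℕ, ℝ) (n + 1) = lam * (μ (n + 1) / lam ^ (n + 1)) := by
      rw [hgc, hTk a n, ha]
      have hfn : f n = μ n / lam ^ n := if_pos (Finset.mem_Icc.mpr ⟨hmn, le_refl n⟩)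
      have hfn1 : f (n + 1) = 0 := hfz _ (by simp only [Finset.mem_Icc]; omega)
      rw [hfn, hfn1, mul_zero, sub_zero]
      have h1 : μ n ≠ 0 := (hμ n).ne'
      have h2 : lam ≠ 0 := hlam0.ne'
      field_simp [pow_succ]
      ring
    have hmn1 : m ≠ n + 1 := by omega
    have hng : ‖g‖ ^ q = lam ^ q * (b m + b (n + 1)) := by
      have hμm := hμ m
      have hμn1 := hμ (n + 1)
      have h := lp.norm_rpow_eq_tsum (p := ENNReal.ofReal q) (by rw [hpt]; exact hq0) g
      rw [hpt] at h
      rw [h, tsum_eq_sum (s := ({m, n + 1} : Finset ℕ))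
        (fun j hj => by rw [hg0 j hj, norm_zero, Real.zero_rpow (ne_of_gt hq0)]),
        Finset.sum_pair hmn1, hgm, hgn1, norm_neg,
        Real.norm_of_nonneg (by positivity), Real.norm_of_nonneg (by positivity),
        Real.mul_rpow hlam0.le (by positivity), Real.mul_rpow hlam0.le (by positivity)]
      simp only [hbdef]
      ring
    have h1 := hle a
    have h2 : (c * ‖a‖) ^ q ≤ ‖g‖ ^ q :=
      Real.rpow_le_rpow (by positivity) h1 hq0.le
    rw [Real.mul_rpow hc.le (norm_nonneg a), hna, hng] at h2
    rw [hCdef, div_mul_eq_mul_div, le_div_iff₀ hcq]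
    calc (∑ k ∈ Finset.Icc m n, b k) * c ^ q
        = c ^ q * ∑ k ∈ Finset.Icc m n, b k := mul_comm _ _
      _ ≤ lam ^ q * (b m + b (n + 1)) := h2
  -- up-jump: find a window where b rises by a large factor
  set r : ℝ := (lam + Kp) / 2 with hrdef
  have hr1 : lam < r := by rw [hrdef]; linarith
  have hr2 : r < Kp := by rw [hrdef]; linarith
  have hr0 : (0:ℝ) < r := lt_trans hlam0 hr1
  have hA : Tendsto (fun n : ℕ => ((r / lam) ^ n) ^ q) atTop atTop := by
    apply (tendsto_rpow_atTop hq0).comp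
    exact tendsto_pow_atTop_atTop_of_one_lt (by rw [lt_div_iff₀ hlam0]; linarith)
  have hev1 : ∀ᶠ n : ℕ in atTop, r < (⨆ k : ℕ, μ (k + n) / μ k) ^ (1 / (n : ℝ)) :=
    hKplim.eventually (eventually_gt_nhds hr2)
  obtain ⟨n, hn⟩ := (((eventually_ge_atTop 1).and (hA.eventually_gt_atTop (2 * C))).and hev1).exists
  obtain ⟨⟨hn1, hnA⟩, hnR⟩ := hn
  have hRpos : (0:ℝ) < ⨆ k : ℕ, μ (k + n) / μ k :=
    lt_of_lt_of_le (div_pos (hμ (0 + n)) (hμ 0)) (le_ciSup (hbddR n) 0)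
  have hn0 : (n:ℝ) ≠ 0 := Nat.cast_ne_zero.mpr (by omega)
  have hrn : r ^ n < ⨆ k : ℕ, μ (k + n) / μ k := by
    have h := Real.rpow_lt_rpow hr0.le hnR
      (by exact_mod_cast Nat.pos_of_ne_zero (by omega) : (0:ℝ) < (n:ℝ))
    rw [← Real.rpow_mul hRpos.le, one_div, inv_mul_cancel₀ hn0, Real.rpow_one,
      Real.rpow_natCast] at h
    exact h
  obtain ⟨k, hk⟩ := exists_lt_of_lt_ciSup hrn
  have hup : ((r / lam) ^ n) ^ q * b k ≤ b (k + n) := by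
    have hμk := hμ k
    have hμkn := hμ (k + n)
    simp only [hbdef]
    rw [← Real.mul_rpow (by positivity) (by positivity)]
    apply Real.rpow_le_rpow (by positivity) ?_ hq0.le
    have h2 : r ^ n * μ k ≤ μ (k + n) := le_of_lt ((lt_div_iff₀ (hμ k)).mp hk)
    calc (r / lam) ^ n * (μ k / lam ^ k) = r ^ n * μ k / lam ^ (k + n) := by
          rw [div_pow, div_mul_div_comm, ← pow_add]
          ring_nf
      _ ≤ μ (k + n) / lam ^ (k + n) := by
          exact (div_le_div_iff_of_pos_right (by positivity)).mpr h2
  have hA0 : (0:ℝ) < ((r / lam) ^ n) ^ q := lt_trans (by positivity) hnA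
  -- after the up-jump, b stays bounded below
  have hU : ∀ j, k + n + 1 ≤ j → b (k + n) ≤ 2 * C * b j := by
    intro j hj
    have hkey := key k (j - 1) (by omega)
    rw [(by omega : j - 1 + 1 = j)] at hkey
    have hsum : b (k + n) ≤ ∑ x ∈ Finset.Icc k (j - 1), b x :=
      Finset.single_le_sum (fun i _ => (hb i).le)
        (by simp only [Finset.mem_Icc]; omega)
    have h4 : b (k + n) ≤ C * b k + C * b j := by
      calc b (k + n) ≤ ∑ x ∈ Finset.Icc k (j - 1), b x := hsum
        _ ≤ C * (b k + b j) := hkey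
        _ = C * b k + C * b j := by ring
    nlinarith [mul_le_mul_of_nonneg_left h4 hA0.le,
      mul_le_mul_of_nonneg_left hup hC.le, hb j, hb k, hb (k + n), hC, hnA,
      mul_pos hC (hb j),
      mul_pos (sub_pos.mpr hnA) (mul_pos hC (hb j))]
  -- uniform positive lower bound for b
  have hne : (Finset.Icc 0 (k + n)).Nonempty := ⟨0, by simp⟩
  obtain ⟨β, hβ0, hβ⟩ : ∃ β : ℝ, 0 < β ∧ ∀ j, β ≤ b j := by
    refine ⟨min (b (k + n) / (2 * C)) ((Finset.Icc 0 (k + n)).inf' hne b), ?_, ?_⟩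
    · apply lt_min (div_pos (hb _) (by positivity))
      obtain ⟨j, _, hj⟩ := Finset.exists_mem_eq_inf' hne b
      rw [hj]; exact hb j
    · intro j
      rcases le_or_gt j (k + n) with h | h
      · exact le_trans (min_le_right _ _)
          (Finset.inf'_le b (by simp only [Finset.mem_Icc]; omega))
      · refine le_trans (min_le_left _ _) ?_
        have h2 := hU j (by omega)
        rw [div_le_iff₀ (by positivity)]
        linarith [h2, mul_comm (b j) (2 * C)]
  -- down-jump: find a window where b drops by a large factor
  set s : ℝ := (1 / lam + Km) / 2 with hsdef
  have h1lam : 1 / lam < Km := by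
    rw [div_lt_iff₀ hlam0]
    rw [div_lt_iff₀ hKm] at hlam1
    linarith [mul_comm lam Km]
  have hs1 : 1 / lam < s := by rw [hsdef]; linarith
  have hs2 : s < Km := by rw [hsdef]; linarith
  have hs0 : (0:ℝ) < s := lt_trans (by positivity) hs1
  have hslam : 1 < s * lam := by
    rw [div_lt_iff₀ hlam0] at hs1
    linarith
  have hA' : Tendsto (fun p : ℕ => ((s * lam) ^ p) ^ q) atTop atTop :=
    (tendsto_rpow_atTop hq0).comp (tendsto_pow_atTop_atTop_of_one_lt hslam)
  have hev2 : ∀ᶠ p : ℕ in atTop, s < (⨆ k : ℕ, μ k / μ (k + p)) ^ (1 / (p : ℝ)) :=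
    hKmlim.eventually (eventually_gt_nhds hs2)
  obtain ⟨p, hp⟩ := (((eventually_ge_atTop 1).and
    (hA'.eventually_gt_atTop (C + C * (b 0 / β)))).and hev2).exists
  obtain ⟨⟨hp1, hpA⟩, hpL⟩ := hp
  have hLpos : (0:ℝ) < ⨆ k : ℕ, μ k / μ (k + p) :=
    lt_of_lt_of_le (div_pos (hμ 0) (hμ (0 + p))) (le_ciSup (hbddL p) 0)
  have hp0 : (p:ℝ) ≠ 0 := Nat.cast_ne_zero.mpr (by omega)
  have hsp : s ^ p < ⨆ k : ℕ, μ k / μ (k + p) := by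
    have h := Real.rpow_lt_rpow hs0.le hpL
      (by exact_mod_cast Nat.pos_of_ne_zero (by omega) : (0:ℝ) < (p:ℝ))
    rw [← Real.rpow_mul hLpos.le, one_div, inv_mul_cancel₀ hp0, Real.rpow_one,
      Real.rpow_natCast] at h
    exact h
  obtain ⟨k', hk'⟩ := exists_lt_of_lt_ciSup hsp
  have hdown : ((s * lam) ^ p) ^ q * b (k' + p) ≤ b k' := by
    have hμk' := hμ k'
    have hμk'p := hμ (k' + p)
    simp only [hbdef]
    rw [← Real.mul_rpow (by positivity) (by positivity)]
    apply Real.rpow_le_rpow (by positivity) ?_ hq0.le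
    have h2 : s ^ p * μ (k' + p) ≤ μ k' := le_of_lt ((lt_div_iff₀ (hμ (k' + p))).mp hk')
    calc (s * lam) ^ p * (μ (k' + p) / lam ^ (k' + p))
        = s ^ p * μ (k' + p) / lam ^ k' := by
          field_simp [mul_pow, pow_add]
          ring
      _ ≤ μ k' / lam ^ k' := (div_le_div_iff_of_pos_right (by positivity)).mpr h2
  -- final contradiction
  have hkey := key 0 (k' + p - 1) (by omega)
  rw [(by omega : k' + p - 1 + 1 = k' + p)] at hkey
  have hsum : b k' ≤ ∑ x ∈ Finset.Icc 0 (k' + p - 1), b x :=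
    Finset.single_le_sum (fun i _ => (hb i).le)
      (by simp only [Finset.mem_Icc]; omega)
  have h4 : ((s * lam) ^ p) ^ q * b (k' + p) ≤ C * b 0 + C * b (k' + p) := by
    calc ((s * lam) ^ p) ^ q * b (k' + p) ≤ b k' := hdown
      _ ≤ ∑ x ∈ Finset.Icc 0 (k' + p - 1), b x := hsum
      _ ≤ C * (b 0 + b (k' + p)) := hkey
      _ = C * b 0 + C * b (k' + p) := by ring
  have hA'C : C < ((s * lam) ^ p) ^ q := by
    have : 0 < C * (b 0 / β) := mul_pos hC (div_pos (hb 0) hβ0)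
    linarith
  have h5 : (((s * lam) ^ p) ^ q - C) * β ≤ (((s * lam) ^ p) ^ q - C) * b (k' + p) :=
    mul_le_mul_of_nonneg_left (hβ _) (by linarith)
  have h6 : (((s * lam) ^ p) ^ q - C) * b (k' + p) ≤ C * b 0 := by nlinarith [h4]
  have hfld : C * (b 0 / β) * β = C * b 0 := by field_simp
  nlinarith [le_trans h5 h6, mul_lt_mul_of_pos_right hpA hβ0, hfld]
end

section
/- In the setting of the context, for every real λ > K₊ the map a ↦ T a − λ·a is a bijection of ℓ^q onto itself; that is, T − λ·I is an isomorphism of ℓ^q. -/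
open Filter Topology
open scoped NNReal ENNReal

/-! The n-th power of `T` shifts by `n` and multiplies the `k`-th entry by `μ (k + n) / μ k`, so
`‖Tⁿ‖ ≤ R(n)`. The Gelfand bound `r(T) ≤ ‖Tⁿ‖^(1/n)` then gives `r(T) ≤ K₊ < λ`, so `λ` lies in the
resolvent set of `T`. -/

theorem lp.norm_le_mul_norm_of_comp_injective {α β E F : Type*} [NormedAddCommGroup E]
    [NormedAddCommGroup F] {p : ℝ≥0∞} [Fact (1 ≤ p)] (hp : 0 < p.toReal) {g : α → β}
    (hg : g.Injective) {C : ℝ} (hC : 0 ≤ C) {x : lp (fun _ : β => E) p}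
    {y : lp (fun _ : α => F) p} (hx : ∀ j ∉ Set.range g, x j = 0)
    (hxy : ∀ i, ‖x (g i)‖ ≤ C * ‖y i‖) : ‖x‖ ≤ C * ‖y‖ := by
  have hle : ∀ i, ‖x (g i)‖ ^ p.toReal ≤ C ^ p.toReal * ‖y i‖ ^ p.toReal := fun i => by
    rw [← Real.mul_rpow hC (norm_nonneg _)]
    exact Real.rpow_le_rpow (norm_nonneg _) (hxy i) hp.le
  have hy : Summable fun i => C ^ p.toReal * ‖y i‖ ^ p.toReal :=
    ((lp.memℓp y).summable hp).mul_left _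
  refine lp.norm_le_of_tsum_le hp (mul_nonneg hC (norm_nonneg _)) ?_
  calc ∑' j, ‖x j‖ ^ p.toReal = ∑' i, ‖x (g i)‖ ^ p.toReal := by
        refine (hg.tsum_eq fun j hj => ?_).symm
        by_contra hjg
        simp [hx j hjg, Real.zero_rpow hp.ne'] at hj
    _ ≤ ∑' i, C ^ p.toReal * ‖y i‖ ^ p.toReal :=
        (hy.of_nonneg_of_le (fun _ => by positivity) hle).tsum_le_tsum hle hy
    _ = (C * ‖y‖) ^ p.toReal := by
        rw [tsum_mul_left, Real.mul_rpow hC (norm_nonneg _), lp.norm_rpow_eq_tsum hp]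

theorem spectrum.spectralRadius_le_ofReal_of_tendsto {𝕜 A : Type*} [NontriviallyNormedField 𝕜]
    [NormedRing A] [NormedAlgebra 𝕜 A] [CompleteSpace A] (h1 : ‖(1 : A)‖ ≤ 1) {a : A}
    {R : ℕ → ℝ} {K : ℝ} (hR : ∀ n, ‖a ^ n‖ ≤ R n)
    (hK : Tendsto (fun n : ℕ => R n ^ (1 / (n : ℝ))) atTop (𝓝 K)) :
    spectralRadius 𝕜 a ≤ ENNReal.ofReal K := by
  have hK' := (ENNReal.tendsto_ofReal hK).comp (tendsto_add_atTop_nat 1)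
  refine ge_of_tendsto hK' (Eventually.of_forall fun n => ?_)
  have h1' : (‖(1 : A)‖₊ : ℝ≥0∞) ^ (1 / (n + 1) : ℝ) ≤ 1 :=
    ENNReal.rpow_le_one (by exact_mod_cast h1) (by positivity)
  calc spectralRadius 𝕜 a
      ≤ (‖a ^ (n + 1)‖₊ : ℝ≥0∞) ^ (1 / (n + 1) : ℝ) * (‖(1 : A)‖₊ : ℝ≥0∞) ^ (1 / (n + 1) : ℝ) :=
        spectrum.spectralRadius_le_pow_nnnorm_pow_one_div 𝕜 a n
    _ ≤ (‖a ^ (n + 1)‖₊ : ℝ≥0∞) ^ (1 / (n + 1) : ℝ) := mul_le_of_le_one_right' h1'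
    _ = ENNReal.ofReal (‖a ^ (n + 1)‖ ^ (1 / (n + 1) : ℝ)) := by
        rw [← ENNReal.ofReal_coe_nnreal, coe_nnnorm,
          ENNReal.ofReal_rpow_of_nonneg (norm_nonneg _) (by positivity)]
    _ ≤ ENNReal.ofReal (R (n + 1) ^ (1 / ((n + 1 : ℕ) : ℝ))) := by
        push_cast
        gcongr
        exact hR _

theorem ContinuousLinearMap.bijective_sub_smul_of_mem_resolventSet {𝕜 E : Type*}
    [NontriviallyNormedField 𝕜] [NormedAddCommGroup E] [NormedSpace 𝕜 E] [CompleteSpace E]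
    {T : E →L[𝕜] E} {r : 𝕜} (hr : r ∈ resolventSet 𝕜 T) :
    Function.Bijective fun x => T x - r • x := by
  have hunit : IsUnit (T - r • 1) := by
    simpa [Algebra.algebraMap_eq_smul_one] using (spectrum.mem_resolventSet_iff.mp hr).neg
  exact ContinuousLinearMap.isUnit_iff_bijective.mp hunit

section WeightedShift

variable {p : ℝ≥0∞} [Fact (1 ≤ p)] {μ : ℕ → ℝ}
  {T : lp (fun _ : ℕ => ℝ) p →L[ℝ] lp (fun _ : ℕ => ℝ) p}

def IsWeightedShift (μ : ℕ → ℝ) (T : lp (fun _ : ℕ => ℝ) p →L[ℝ] lp (fun _ : ℕ => ℝ) p) :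
    Prop :=
  ∀ a, T a 0 = 0 ∧ ∀ k, T a (k + 1) = μ (k + 1) / μ k * a k

theorem IsWeightedShift.pow_apply_of_lt (hT : IsWeightedShift μ T) {n k : ℕ} (hk : k < n)
    (a : lp (fun _ : ℕ => ℝ) p) : (T ^ n) a k = 0 := by
  induction n generalizing k with
  | zero => exact absurd hk k.not_lt_zero
  | succ n ih =>
    rw [pow_succ', mul_apply_eq_comp]
    cases k with
    | zero => exact (hT _).1
    | succ k => rw [(hT _).2, ih (by omega), mul_zero]

theorem IsWeightedShift.pow_apply_add (hT : IsWeightedShift μ T) (hμ : ∀ k, μ k ≠ 0)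
    (n k : ℕ) (a : lp (fun _ : ℕ => ℝ) p) : (T ^ n) a (k + n) = μ (k + n) / μ k * a k := by
  induction n with
  | zero => simp [div_self (hμ k)]
  | succ n ih =>
    rw [pow_succ', mul_apply_eq_comp, ← add_assoc, (hT _).2, ih, ← mul_assoc,
      div_mul_div_cancel₀ (hμ _)]

theorem IsWeightedShift.norm_pow_le (hT : IsWeightedShift μ T) (hμ : ∀ k, μ k ≠ 0)
    (hp : 0 < p.toReal) (n : ℕ) {C : ℝ} (hC : ∀ k, |μ (k + n) / μ k| ≤ C) : ‖T ^ n‖ ≤ C := by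
  have hC0 : 0 ≤ C := (abs_nonneg _).trans (hC 0)
  refine ContinuousLinearMap.opNorm_le_bound _ hC0 fun a =>
    lp.norm_le_mul_norm_of_comp_injective hp (add_left_injective n) hC0 (fun j hj => ?_) fun k => ?_
  · exact hT.pow_apply_of_lt (not_le.mp fun hnj => hj ⟨j - n, Nat.sub_add_cancel hnj⟩) a
  · rw [hT.pow_apply_add hμ, norm_mul, Real.norm_eq_abs]
    gcongr
    exact hC k

end WeightedShift

theorem stmt10_general (q : ℝ) (hq : 1 ≤ q) [Fact (1 ≤ ENNReal.ofReal q)]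
    (μ : ℕ → ℝ) (hμ : ∀ k, 0 < μ k)
    (T : lp (fun _ : ℕ => ℝ) (ENNReal.ofReal q) →L[ℝ] lp (fun _ : ℕ => ℝ) (ENNReal.ofReal q))
    (hT0 : ∀ a, (T a : ∀ _ : ℕ, ℝ) 0 = 0)
    (hTk : ∀ a (k : ℕ), (T a : ∀ _ : ℕ, ℝ) (k + 1) = (μ (k + 1) / μ k) * (a : ∀ _ : ℕ, ℝ) k)
    (hbddR : ∀ n : ℕ, BddAbove (Set.range fun k => μ (k + n) / μ k))
    (Kp : ℝ) (hKp : 0 < Kp)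
    (hKplim : Tendsto (fun n : ℕ => (⨆ k : ℕ, μ (k + n) / μ k) ^ (1 / (n : ℝ))) atTop (nhds Kp))
    (lam : ℝ) (hlam : Kp < lam) :
    Function.Bijective (fun a : lp (fun _ : ℕ => ℝ) (ENNReal.ofReal q) => T a - lam • a) := by
  have hp : 0 < (ENNReal.ofReal q).toReal := by
    rw [ENNReal.toReal_ofReal (by linarith)]
    linarith
  have hT : IsWeightedShift μ T := fun a => ⟨hT0 a, hTk a⟩
  have hTn (n : ℕ) : ‖T ^ n‖ ≤ ⨆ k, μ (k + n) / μ k :=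
    hT.norm_pow_le (fun k => (hμ k).ne') hp n fun k => by
      rw [abs_of_pos (div_pos (hμ _) (hμ _))]
      exact le_ciSup (hbddR n) k
  have hr : spectralRadius ℝ T < ‖lam‖₊ :=
    calc spectralRadius ℝ T ≤ ENNReal.ofReal Kp :=
          spectrum.spectralRadius_le_ofReal_of_tendsto ContinuousLinearMap.norm_id_le hTn hKplim
      _ < ‖lam‖₊ := by
          have hlam0 : 0 < lam := hKp.trans hlam
          rwa [← ENNReal.ofReal_coe_nnreal, coe_nnnorm, Real.norm_of_nonneg hlam0.le,
            ENNReal.ofReal_lt_ofReal_iff hlam0]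
  exact ContinuousLinearMap.bijective_sub_smul_of_mem_resolventSet
    (spectrum.mem_resolventSet_of_spectralRadius_lt hr)

theorem stmt10 (q : ℝ) (hq : 1 ≤ q) [Fact (1 ≤ ENNReal.ofReal q)]
    (μ : ℕ → ℝ) (hμ : ∀ k, 0 < μ k)
    (M : ℝ) (hM : 1 ≤ M)
    (hM1 : ∀ k, μ k ≤ M * μ (k + 1)) (hM2 : ∀ k, μ (k + 1) ≤ M * μ k)
    (T : lp (fun _ : ℕ => ℝ) (ENNReal.ofReal q) →L[ℝ] lp (fun _ : ℕ => ℝ) (ENNReal.ofReal q))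
    (hT0 : ∀ a, (T a : ∀ _ : ℕ, ℝ) 0 = 0)
    (hTk : ∀ a (k : ℕ), (T a : ∀ _ : ℕ, ℝ) (k + 1) = (μ (k + 1) / μ k) * (a : ∀ _ : ℕ, ℝ) k)
    (hbddR : ∀ n : ℕ, BddAbove (Set.range fun k => μ (k + n) / μ k))
    (hbddL : ∀ n : ℕ, BddAbove (Set.range fun k => μ k / μ (k + n)))
    (Kp Km : ℝ) (hKp : 0 < Kp) (hKm : 0 < Km)
    (hKplim : Tendsto (fun n : ℕ => (⨆ k : ℕ, μ (k + n) / μ k) ^ (1 / (n : ℝ))) atTop (nhds Kp))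
    (hKmlim : Tendsto (fun n : ℕ => (⨆ k : ℕ, μ k / μ (k + n)) ^ (1 / (n : ℝ))) atTop (nhds Km))
    (lam : ℝ) (hlam : Kp < lam) :
    Function.Bijective (fun a : lp (fun _ : ℕ => ℝ) (ENNReal.ofReal q) => T a - lam • a) :=
  stmt10_general q hq μ hμ T hT0 hTk hbddR Kp hKp hKplim lam hlam
end

section
/- In the setting of the context, for every real λ with 0 < λ < 1/K₋ the following hold: (i) for every a ∈ ℓ^q the series Σ_{k=0}^∞ λ^k·a(k)/μ(k) converges absolutely; (ii) T − λ·I is bounded below: there exists c > 0 with c·‖a‖ ≤ ‖T a − λ·a‖ for all a ∈ ℓ^q; and (iii) the range of the map a ↦ T a − λ·a is exactly the closed hyperplane {a ∈ ℓ^q : Σ_{k=0}^∞ λ^k·a(k)/μ(k) = 0}. -/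
/-!
Let `S` be the backward shift `(S b)_k = μ_k / μ_{k+1} · b_{k+1}`, so that `S T = 1` and
`‖S^n‖ ≤ L(n) = sup_k μ_k / μ_{k+n}`. Since `L(n)^{1/n} → K₋` and `λ K₋ < 1`, the root test makes
`∑ ‖(λ S)^n‖` converge, so `1 - λ S` is invertible with inverse `G = ∑ (λ S)^n`. Hence
`T - λ = (1 - λ S) T` has the bounded left inverse `S G`, and its range is `{b | G b ∈ range T}`,
where `range T = {b | b_0 = 0}`. Finally `((λ S)^n b)_0 = μ_0 λ^n b_n / μ_n`, which gives both the
absolute convergence of the series and `(G b)_0 = μ_0 ∑ λ^n b_n / μ_n`.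
-/

open Filter Topology

theorem summable_pow_mul_of_tendsto_rpow_one_div {u : ℕ → ℝ} {K r : ℝ} (hu : ∀ n, 0 ≤ u n)
    (hlim : Tendsto (fun n : ℕ => u n ^ (1 / (n : ℝ))) atTop (𝓝 K)) (hr : 0 ≤ r)
    (hrK : r * K < 1) : Summable fun n => r ^ n * u n := by
  obtain ⟨ρ, hρK, hρ1⟩ := exists_between hrK
  have hK : 0 ≤ K := ge_of_tendsto' hlim fun n => Real.rpow_nonneg (hu n) _
  have hρ : 0 ≤ ρ := (mul_nonneg hr hK).trans hρK.le
  refine Summable.of_norm_bounded_eventually_nat (summable_geometric_of_lt_one hρ hρ1) ?_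
  filter_upwards [(hlim.const_mul r).eventually_lt_const hρK, eventually_ne_atTop 0] with n hn hn0
  rw [Real.norm_of_nonneg (mul_nonneg (pow_nonneg hr n) (hu n)),
    ← Real.rpow_inv_natCast_pow (hu n) hn0, ← mul_pow, ← one_div]
  exact pow_le_pow_left₀ (mul_nonneg hr (Real.rpow_nonneg (hu n) _)) hn.le n

namespace lp

variable {p : ENNReal} [Fact (1 ≤ p)]

theorem memℓp_comp_add_right (f : lp (fun _ : ℕ => ℝ) p) (n : ℕ) :
    Memℓp (fun k => f (k + n)) p := by
  obtain rfl | hp := eq_or_ne p ⊤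
  · exact memℓp_infty_iff.2 ((lp.memℓp f).bddAbove.mono
      (Set.range_comp_subset_range (· + n) fun k => ‖f k‖))
  · have hp' : 0 < p.toReal := ENNReal.toReal_pos (zero_lt_one.trans_le Fact.out).ne' hp
    exact memℓp_gen ((summable_nat_add_iff n).2 ((lp.memℓp f).summable hp'))

theorem norm_le_mul_norm_of_forall_norm_le_comp_add {x b : lp (fun _ : ℕ => ℝ) p} {C : ℝ}
    (hC : 0 ≤ C) (n : ℕ) (h : ∀ k, ‖x k‖ ≤ C * ‖b (k + n)‖) : ‖x‖ ≤ C * ‖b‖ := by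
  have hp0 : p ≠ 0 := (zero_lt_one.trans_le Fact.out).ne'
  obtain rfl | hp := eq_or_ne p ⊤
  · exact norm_le_of_forall_le (by positivity) fun k =>
      (h k).trans (mul_le_mul_of_nonneg_left (norm_apply_le_norm hp0 b _) hC)
  · have hp' : 0 < p.toReal := ENNReal.toReal_pos hp0 hp
    refine norm_le_of_forall_sum_le hp' (by positivity) fun s => ?_
    calc ∑ k ∈ s, ‖x k‖ ^ p.toReal ≤ ∑ k ∈ s, (C * ‖b (k + n)‖) ^ p.toReal := by
          gcongr with k; exact h k
      _ = C ^ p.toReal * ∑ j ∈ s.map (addRightEmbedding n), ‖b j‖ ^ p.toReal := by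
          rw [Finset.sum_map, Finset.mul_sum]
          exact Finset.sum_congr rfl fun k _ => Real.mul_rpow hC (norm_nonneg _)
      _ ≤ C ^ p.toReal * ‖b‖ ^ p.toReal := by
          gcongr; exact sum_rpow_le_norm_rpow hp' b _
      _ = (C * ‖b‖) ^ p.toReal := (Real.mul_rpow hC (norm_nonneg _)).symm

noncomputable def weightedBackwardShift (w : ℕ → ℝ) {C : ℝ} (hw : ∀ k, |w k| ≤ C) :
    lp (fun _ : ℕ => ℝ) p →L[ℝ] lp (fun _ : ℕ => ℝ) p :=
  LinearMap.mkContinuous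
    { toFun := fun b => ⟨fun k => w k * b (k + 1),
        ((memℓp_comp_add_right b 1).norm.const_mul C).mono fun k =>
          (norm_mul_le _ _).trans (mul_le_mul_of_nonneg_right (hw k) (norm_nonneg _))⟩
      map_add' := fun a b => by ext k; exact mul_add _ _ _
      map_smul' := fun c b => by ext k; exact mul_left_comm _ _ _ }
    C fun b => norm_le_mul_norm_of_forall_norm_le_comp_add ((abs_nonneg _).trans (hw 0)) 1
      fun k => (norm_mul_le _ _).trans (mul_le_mul_of_nonneg_right (hw k) (norm_nonneg _))

@[simp]
theorem weightedBackwardShift_apply (w : ℕ → ℝ) {C : ℝ} (hw : ∀ k, |w k| ≤ C)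
    (b : lp (fun _ : ℕ => ℝ) p) (k : ℕ) :
    weightedBackwardShift w hw b k = w k * b (k + 1) := rfl

end lp

section LeftInverse

variable {𝕜 E : Type*} [NontriviallyNormedField 𝕜] [NormedAddCommGroup E] [NormedSpace 𝕜 E]
  {S T : E →L[𝕜] E} {c : 𝕜}

theorem sub_smul_eq_one_sub_smul_apply (hST : S * T = 1) (a : E) :
    T a - c • a = (1 - c • S) (T a) := by
  have hSTa : S (T a) = a := by rw [← mul_apply_eq_comp, hST, one_apply_eq_self]
  simp [hSTa]

theorem exists_pos_mul_norm_le_norm_sub_smul (hST : S * T = 1)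
    (hsum : Summable fun n => (c • S) ^ n) :
    ∃ C, 0 < C ∧ ∀ a, C * ‖a‖ ≤ ‖T a - c • a‖ := by
  set B := S * ∑' n, (c • S) ^ n
  have hBT : ∀ a, B (T a - c • a) = a := fun a => by
    rw [sub_smul_eq_one_sub_smul_apply hST, ← mul_apply_eq_comp,
      ← mul_apply_eq_comp, mul_assoc S, hsum.tsum_pow_mul_one_sub, mul_one, hST,
      one_apply_eq_self]
  refine ⟨(‖B‖ + 1)⁻¹, by positivity, fun a => ?_⟩
  rw [inv_mul_le_iff₀ (by positivity)]
  calc ‖a‖ = ‖B (T a - c • a)‖ := by rw [hBT]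
    _ ≤ ‖B‖ * ‖T a - c • a‖ := B.le_opNorm _
    _ ≤ (‖B‖ + 1) * ‖T a - c • a‖ := by gcongr; linarith

theorem range_sub_smul_eq (hST : S * T = 1) (hsum : Summable fun n => (c • S) ^ n) :
    Set.range (fun a => T a - c • a) = {b | (∑' n, (c • S) ^ n) b ∈ Set.range T} := by
  ext b
  constructor
  · rintro ⟨a, rfl⟩
    refine ⟨a, ?_⟩
    dsimp only
    rw [sub_smul_eq_one_sub_smul_apply hST, ← mul_apply_eq_comp,
      hsum.tsum_pow_mul_one_sub, one_apply_eq_self]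
  · rintro ⟨a, ha⟩
    refine ⟨a, ?_⟩
    dsimp only
    rw [sub_smul_eq_one_sub_smul_apply hST, ha, ← mul_apply_eq_comp,
      hsum.one_sub_mul_tsum_pow, one_apply_eq_self]

end LeftInverse

section WeightedShift

variable {p : ENNReal} [Fact (1 ≤ p)] {μ : ℕ → ℝ} (hμ : ∀ k, 0 < μ k)

noncomputable def backwardShiftOfWeight (hbdd₁ : BddAbove (Set.range fun k => μ k / μ (k + 1))) :
    lp (fun _ : ℕ => ℝ) p →L[ℝ] lp (fun _ : ℕ => ℝ) p :=
  lp.weightedBackwardShift (fun k => μ k / μ (k + 1)) (C := ⨆ k, μ k / μ (k + 1))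
    fun k => (abs_of_pos (div_pos (hμ k) (hμ (k + 1)))).trans_le (le_ciSup hbdd₁ k)

variable (hbdd₁ : BddAbove (Set.range fun k => μ k / μ (k + 1)))

theorem backwardShiftOfWeight_pow_apply (n : ℕ) (b : lp (fun _ : ℕ => ℝ) p) (k : ℕ) :
    (backwardShiftOfWeight hμ hbdd₁ ^ n) b k = μ k / μ (k + n) * b (k + n) := by
  induction n generalizing b with
  | zero => simp [div_self (hμ k).ne']
  | succ n ih =>
    rw [pow_succ, mul_apply_eq_comp, ih, ← add_assoc]
    simp only [backwardShiftOfWeight, lp.weightedBackwardShift_apply]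
    field_simp [(hμ (k + n)).ne']

theorem smul_backwardShiftOfWeight_pow_apply_zero (c : ℝ) (n : ℕ) (b : lp (fun _ : ℕ => ℝ) p) :
    ((c • backwardShiftOfWeight hμ hbdd₁) ^ n) b 0 = μ 0 * (c ^ n * b n / μ n) := by
  rw [smul_pow, smul_apply, lp.coeFn_smul, Pi.smul_apply,
    backwardShiftOfWeight_pow_apply, zero_add, smul_eq_mul]
  ring

theorem norm_backwardShiftOfWeight_pow_le
    (hbdd : ∀ n, BddAbove (Set.range fun k => μ k / μ (k + n))) (n : ℕ) :
    ‖(backwardShiftOfWeight hμ (hbdd 1) ^ n : lp (fun _ : ℕ => ℝ) p →L[ℝ] _)‖ ≤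
      ⨆ k, μ k / μ (k + n) := by
  have hpos : ∀ k, 0 < μ k / μ (k + n) := fun k => div_pos (hμ k) (hμ (k + n))
  have hL : 0 ≤ ⨆ k, μ k / μ (k + n) := (hpos 0).le.trans (le_ciSup (hbdd n) 0)
  refine ContinuousLinearMap.opNorm_le_bound _ hL fun b =>
    lp.norm_le_mul_norm_of_forall_norm_le_comp_add hL n fun k => ?_
  rw [backwardShiftOfWeight_pow_apply, norm_mul, Real.norm_of_nonneg (hpos k).le]
  exact mul_le_mul_of_nonneg_right (le_ciSup (hbdd n) k) (norm_nonneg _)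

variable {T : lp (fun _ : ℕ => ℝ) p →L[ℝ] lp (fun _ : ℕ => ℝ) p}

theorem backwardShiftOfWeight_mul_eq_one (hTk : ∀ a k, T a (k + 1) = μ (k + 1) / μ k * a k) :
    backwardShiftOfWeight hμ hbdd₁ * T = 1 := by
  ext a k
  simp only [mul_apply_eq_comp, backwardShiftOfWeight, lp.weightedBackwardShift_apply, hTk,
    one_apply_eq_self]
  field_simp [(hμ k).ne', (hμ (k + 1)).ne']

theorem summable_norm_smul_backwardShiftOfWeight_pow
    (hbdd : ∀ n, BddAbove (Set.range fun k => μ k / μ (k + n))) {K c : ℝ} (hc : 0 ≤ c)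
    (hcK : c * K < 1)
    (hK : Tendsto (fun n : ℕ => (⨆ k, μ k / μ (k + n)) ^ (1 / (n : ℝ))) atTop (𝓝 K)) :
    Summable fun n =>
      ‖((c • backwardShiftOfWeight hμ (hbdd 1)) ^ n : lp (fun _ : ℕ => ℝ) p →L[ℝ] _)‖ := by
  refine .of_nonneg_of_le (fun n => norm_nonneg _) (fun n => ?_)
    (summable_pow_mul_of_tendsto_rpow_one_div
      (fun n => Real.iSup_nonneg fun k => (div_pos (hμ k) (hμ (k + n))).le) hK hc hcK)
  rw [smul_pow, norm_smul, norm_pow, Real.norm_of_nonneg hc]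
  exact mul_le_mul_of_nonneg_left (norm_backwardShiftOfWeight_pow_le hμ hbdd n) (pow_nonneg hc n)

theorem summable_abs_pow_mul_apply_div {c : ℝ}
    (hsum : Summable fun n =>
      ‖((c • backwardShiftOfWeight hμ hbdd₁) ^ n : lp (fun _ : ℕ => ℝ) p →L[ℝ] _)‖)
    (a : lp (fun _ : ℕ => ℝ) p) :
    Summable fun k => |c ^ k * a k / μ k| := by
  have hp : p ≠ 0 := (zero_lt_one.trans_le Fact.out).ne'
  refine .of_nonneg_of_le (fun k => abs_nonneg _) (fun k => ?_)
    ((hsum.mul_right ‖a‖).div_const (μ 0))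
  calc |c ^ k * a k / μ k| = ‖((c • backwardShiftOfWeight hμ hbdd₁) ^ k) a 0‖ / μ 0 := by
        rw [smul_backwardShiftOfWeight_pow_apply_zero, norm_mul, Real.norm_of_nonneg (hμ 0).le,
          mul_div_cancel_left₀ _ (hμ 0).ne', Real.norm_eq_abs]
    _ ≤ ‖(c • backwardShiftOfWeight hμ hbdd₁) ^ k‖ * ‖a‖ / μ 0 :=
        div_le_div_of_nonneg_right
          ((lp.norm_apply_le_norm hp _ 0).trans (ContinuousLinearMap.le_opNorm _ _)) (hμ 0).le

theorem tsum_smul_backwardShiftOfWeight_pow_apply_zero {c : ℝ}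
    (hsum : Summable fun n => (c • backwardShiftOfWeight (p := p) hμ hbdd₁) ^ n)
    (b : lp (fun _ : ℕ => ℝ) p) :
    (∑' n, (c • backwardShiftOfWeight (p := p) hμ hbdd₁) ^ n) b 0 =
      μ 0 * ∑' n, c ^ n * b n / μ n := by
  have h : HasSum (fun n => ((c • backwardShiftOfWeight hμ hbdd₁) ^ n) b 0)
      ((∑' n, (c • backwardShiftOfWeight hμ hbdd₁) ^ n) b 0) :=
    (lp.evalCLM ℝ (fun _ : ℕ => ℝ) p 0 ∘L ContinuousLinearMap.apply ℝ _ b).hasSum hsum.hasSum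
  simp only [smul_backwardShiftOfWeight_pow_apply_zero] at h
  rw [← h.tsum_eq, tsum_mul_left]

end WeightedShift

theorem range_eq_setOf_apply_zero_eq_zero {p : ENNReal} [Fact (1 ≤ p)] {μ : ℕ → ℝ}
    {T : lp (fun _ : ℕ => ℝ) p →L[ℝ] lp (fun _ : ℕ => ℝ) p} (hμ : ∀ k, 0 < μ k)
    (hbdd₁ : BddAbove (Set.range fun k => μ k / μ (k + 1))) (hT0 : ∀ a, T a 0 = 0)
    (hTk : ∀ a k, T a (k + 1) = μ (k + 1) / μ k * a k) :
    Set.range T = {b | b 0 = 0} := by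
  ext b
  refine ⟨by rintro ⟨a, rfl⟩; exact hT0 a, fun hb => ⟨backwardShiftOfWeight hμ hbdd₁ b, ?_⟩⟩
  ext (_ | k)
  · exact (hT0 _).trans hb.symm
  · rw [hTk, backwardShiftOfWeight, lp.weightedBackwardShift_apply]
    field_simp [(hμ k).ne', (hμ (k + 1)).ne']

theorem stmt11_general (q : ℝ) [Fact (1 ≤ ENNReal.ofReal q)]
    (μ : ℕ → ℝ) (hμ : ∀ k, 0 < μ k)
    (T : lp (fun _ : ℕ => ℝ) (ENNReal.ofReal q) →L[ℝ] lp (fun _ : ℕ => ℝ) (ENNReal.ofReal q))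
    (hT0 : ∀ a, (T a : ∀ _ : ℕ, ℝ) 0 = 0)
    (hTk : ∀ a (k : ℕ), (T a : ∀ _ : ℕ, ℝ) (k + 1) = (μ (k + 1) / μ k) * (a : ∀ _ : ℕ, ℝ) k)
    (hbddL : ∀ n : ℕ, BddAbove (Set.range fun k => μ k / μ (k + n)))
    (Km : ℝ)
    (hKmlim : Tendsto (fun n : ℕ => (⨆ k : ℕ, μ k / μ (k + n)) ^ (1 / (n : ℝ))) atTop (nhds Km))
    (lam : ℝ) (hlam0 : 0 < lam) (hlam : lam < 1 / Km) :
    (∀ a : lp (fun _ : ℕ => ℝ) (ENNReal.ofReal q),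
        Summable (fun k : ℕ => |lam ^ k * (a : ∀ _ : ℕ, ℝ) k / μ k|)) ∧
    (∃ c : ℝ, 0 < c ∧ ∀ a, c * ‖a‖ ≤ ‖T a - lam • a‖) ∧
    (Set.range (fun a : lp (fun _ : ℕ => ℝ) (ENNReal.ofReal q) => T a - lam • a) =
      {a : lp (fun _ : ℕ => ℝ) (ENNReal.ofReal q) |
        ∑' k : ℕ, lam ^ k * (a : ∀ _ : ℕ, ℝ) k / μ k = 0}) := by
  set S := backwardShiftOfWeight (p := ENNReal.ofReal q) hμ (hbddL 1)
  have hST : S * T = 1 := backwardShiftOfWeight_mul_eq_one hμ (hbddL 1) hTk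
  have hlamKm : lam * Km < 1 := (lt_div_iff₀ (one_div_pos.mp (hlam0.trans hlam))).mp hlam
  have hnorm : Summable fun n => ‖(lam • S) ^ n‖ :=
    summable_norm_smul_backwardShiftOfWeight_pow hμ hbddL hlam0.le hlamKm hKmlim
  have hsum : Summable fun n => (lam • S) ^ n := hnorm.of_norm
  refine ⟨summable_abs_pow_mul_apply_div hμ (hbddL 1) hnorm,
    exists_pos_mul_norm_le_norm_sub_smul hST hsum, ?_⟩
  rw [range_sub_smul_eq hST hsum, range_eq_setOf_apply_zero_eq_zero hμ (hbddL 1) hT0 hTk]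
  ext b
  simp only [Set.mem_ofPred, S, tsum_smul_backwardShiftOfWeight_pow_apply_zero hμ (hbddL 1) hsum,
    mul_eq_zero, (hμ 0).ne', false_or]

theorem stmt11 (q : ℝ) (hq : 1 ≤ q) [Fact (1 ≤ ENNReal.ofReal q)]
    (μ : ℕ → ℝ) (hμ : ∀ k, 0 < μ k)
    (M : ℝ) (hM : 1 ≤ M)
    (hM1 : ∀ k, μ k ≤ M * μ (k + 1)) (hM2 : ∀ k, μ (k + 1) ≤ M * μ k)
    (T : lp (fun _ : ℕ => ℝ) (ENNReal.ofReal q) →L[ℝ] lp (fun _ : ℕ => ℝ) (ENNReal.ofReal q))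
    (hT0 : ∀ a, (T a : ∀ _ : ℕ, ℝ) 0 = 0)
    (hTk : ∀ a (k : ℕ), (T a : ∀ _ : ℕ, ℝ) (k + 1) = (μ (k + 1) / μ k) * (a : ∀ _ : ℕ, ℝ) k)
    (hbddR : ∀ n : ℕ, BddAbove (Set.range fun k => μ (k + n) / μ k))
    (hbddL : ∀ n : ℕ, BddAbove (Set.range fun k => μ k / μ (k + n)))
    (Kp Km : ℝ) (hKp : 0 < Kp) (hKm : 0 < Km)
    (hKplim : Tendsto (fun n : ℕ => (⨆ k : ℕ, μ (k + n) / μ k) ^ (1 / (n : ℝ))) atTop (nhds Kp))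
    (hKmlim : Tendsto (fun n : ℕ => (⨆ k : ℕ, μ k / μ (k + n)) ^ (1 / (n : ℝ))) atTop (nhds Km))
    (lam : ℝ) (hlam0 : 0 < lam) (hlam : lam < 1 / Km) :
    (∀ a : lp (fun _ : ℕ => ℝ) (ENNReal.ofReal q),
        Summable (fun k : ℕ => |lam ^ k * (a : ∀ _ : ℕ, ℝ) k / μ k|)) ∧
    (∃ c : ℝ, 0 < c ∧ ∀ a, c * ‖a‖ ≤ ‖T a - lam • a‖) ∧
    (Set.range (fun a : lp (fun _ : ℕ => ℝ) (ENNReal.ofReal q) => T a - lam • a) =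
      {a : lp (fun _ : ℕ => ℝ) (ENNReal.ofReal q) |
        ∑' k : ℕ, lam ^ k * (a : ∀ _ : ℕ, ℝ) k / μ k = 0}) :=
  stmt11_general q μ hμ T hT0 hTk hbddL Km hKmlim lam hlam0 hlam
end

section
/- Let q ≥ 1 be real, let w : ℕ → ℝ be nonnegative, let N ≥ 1 be a natural number, and let C ≥ 0 satisfy Σ_{i=1}^{N·j} w(i)^q ≤ C·Σ_{i=1}^{j} w(i)^q for every j ≥ 1. Then for every m ≥ 1 and every nonnegative nonincreasing x : ℕ → ℝ, Σ_{k=1}^{m} x(k)^q·(Σ_{i=N(k−1)+1}^{N·k} w(i)^q) ≤ C·Σ_{k=1}^{m} x(k)^q·w(k)^q. (This is the Abel-transformation estimate showing that the dilation operator σ_N on the Lorentz space λ_q(w) satisfies ‖σ_N‖^q ≤ sup_j Σ_{i=1}^{Nj} w_i^q / Σ_{i=1}^{j} w_i^q, i.e., that Lorentz sequence spaces are of fundamental type.) -/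
theorem stmt12 (q : ℝ) (hq : 1 ≤ q) (w : ℕ → ℝ) (hw : ∀ i, 0 ≤ w i)
    (N : ℕ) (hN : 1 ≤ N) (C : ℝ) (hC : 0 ≤ C)
    (hdom : ∀ j : ℕ, 1 ≤ j →
      ∑ i ∈ Finset.Icc 1 (N * j), w i ^ q ≤ C * ∑ i ∈ Finset.Icc 1 j, w i ^ q) :
    ∀ m : ℕ, 1 ≤ m → ∀ x : ℕ → ℝ, (∀ k, 0 ≤ x k) → Antitone x →
      ∑ k ∈ Finset.Icc 1 m, x k ^ q * ∑ i ∈ Finset.Icc (N * (k - 1) + 1) (N * k), w i ^ q ≤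
        C * ∑ k ∈ Finset.Icc 1 m, x k ^ q * w k ^ q := by
  intro m hm x hx hmono
  set V : ℕ → ℝ := fun j => ∑ i ∈ Finset.Icc 1 j, w i ^ q with hV
  have hVB : ∀ j, 1 ≤ j → V (N * j) ≤ C * V j := fun j hj => hdom j hj
  have hIoc : ∀ n : ℕ, Finset.Icc 1 n = Finset.Ioc 0 n := fun n => Finset.Icc_add_one_left_eq_Ioc 0 n
  have hVstep : ∀ a b : ℕ, a ≤ b →
      V a + ∑ i ∈ Finset.Icc (a + 1) b, w i ^ q = V b := by
    intro a b hab
    simp only [hV, hIoc, Finset.Icc_add_one_left_eq_Ioc]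
    exact Finset.sum_Ioc_consecutive _ (Nat.zero_le a) hab
  have hblock : ∀ k : ℕ, 1 ≤ k →
      ∑ i ∈ Finset.Icc (N * (k - 1) + 1) (N * k), w i ^ q = V (N * k) - V (N * (k - 1)) := by
    intro k hk
    have h1 : N * (k - 1) ≤ N * k := Nat.mul_le_mul_left _ (Nat.sub_le _ _)
    have := hVstep (N * (k - 1)) (N * k) h1
    linarith
  have hA : ∀ k, 0 ≤ x k ^ q := fun k => Real.rpow_nonneg (hx k) q
  have hAmono : ∀ k, x (k + 1) ^ q ≤ x k ^ q := fun k =>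
    Real.rpow_le_rpow (hx (k + 1)) (hmono (Nat.le_succ k)) (le_trans zero_le_one hq)
  have hVnonneg : ∀ j, 0 ≤ V j := fun j =>
    Finset.sum_nonneg fun i _ => Real.rpow_nonneg (hw i) q
  -- strengthened claim
  have key : ∀ m : ℕ, 1 ≤ m →
      ∑ k ∈ Finset.Icc 1 m, x k ^ q * (V (N * k) - V (N * (k - 1)))
        + x m ^ q * (C * V m - V (N * m))
      ≤ C * ∑ k ∈ Finset.Icc 1 m, x k ^ q * w k ^ q := by
    intro m hm
    induction m, hm using Nat.le_induction with
    | base =>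
      simp only [Finset.Icc_self, Finset.sum_singleton, Nat.mul_one, Nat.sub_self, Nat.mul_zero]
      have hV0 : V 0 = 0 := by simp [hV]
      have hV1 : V 1 = w 1 ^ q := by simp [hV]
      rw [hV0, hV1]
      ring_nf
      nlinarith [hA 1]
    | succ n hn ih =>
      rw [Finset.sum_Icc_succ_top (by omega : 1 ≤ n + 1),
          Finset.sum_Icc_succ_top (by omega : 1 ≤ n + 1)]
      have hstep : V (n + 1) = V n + w (n + 1) ^ q := by
        have := hVstep n (n + 1) (Nat.le_succ n)
        simp only [Finset.Icc_self, Finset.sum_singleton] at this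
        linarith
      have hsub : (n + 1 : ℕ) - 1 = n := rfl
      have hBn : V (N * n) ≤ C * V n := hVB n hn
      have hAineq : (x n ^ q - x (n + 1) ^ q) * (V (N * n) - C * V n) ≤ 0 := by
        have h1 : 0 ≤ x n ^ q - x (n + 1) ^ q := by linarith [hAmono n]
        have h2 : V (N * n) - C * V n ≤ 0 := by linarith
        exact mul_nonpos_of_nonneg_of_nonpos h1 h2
      have hexp : x n ^ q * V (N * n) - x n ^ q * (C * V n)
          - x (n + 1) ^ q * V (N * n) + x (n + 1) ^ q * (C * V n) ≤ 0 := by nlinarith [hAineq]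
      rw [hsub, hstep]
      linarith [ih, hexp]
  have hfin : ∑ k ∈ Finset.Icc 1 m, x k ^ q *
        ∑ i ∈ Finset.Icc (N * (k - 1) + 1) (N * k), w i ^ q
      = ∑ k ∈ Finset.Icc 1 m, x k ^ q * (V (N * k) - V (N * (k - 1))) := by
    refine Finset.sum_congr rfl fun k hk => ?_
    rw [hblock k (Finset.mem_Icc.mp hk).1]
  rw [hfin]
  have hpos : 0 ≤ x m ^ q * (C * V m - V (N * m)) := by
    have := hVB m hm
    exact mul_nonneg (hA m) (by linarith)
  linarith [key m hm]
end

section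
/- Let g : ℝ → ℝ be nondecreasing on [0,∞), concave on [0,∞), with g(0) = 0. Let n ≥ 1 be a natural number and A ≥ 0 a real number such that g(2^{-(m+n)}) ≤ A·g(2^{-m}) for every natural number m. Then for every real s with 0 < s ≤ 1, g(2^{1−n}·s) ≤ 4·A·g(s). -/
theorem stmt14 (g : ℝ → ℝ) (hmono : MonotoneOn g (Set.Ici 0))
    (hconc : ConcaveOn ℝ (Set.Ici 0) g) (hg0 : g 0 = 0)
    (n : ℕ) (hn : 1 ≤ n) (A : ℝ) (hA : 0 ≤ A)
    (h : ∀ m : ℕ, g ((2 : ℝ) ^ (-((m : ℤ) + (n : ℤ)))) ≤ A * g ((2 : ℝ) ^ (-(m : ℤ)))) :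
    ∀ s : ℝ, 0 < s → s ≤ 1 → g ((2 : ℝ) ^ (1 - (n : ℤ)) * s) ≤ 4 * A * g s := by
  -- doubling lemma
  have hdouble : ∀ x : ℝ, 0 ≤ x → g (2 * x) ≤ 2 * g x := by
    intro x hx
    have h2x : (2 : ℝ) * x ∈ Set.Ici (0:ℝ) := by
      simp [Set.mem_Ici]; linarith
    have h0 : (0:ℝ) ∈ Set.Ici (0:ℝ) := Set.mem_Ici.mpr le_rfl
    have := hconc.2 h0 h2x (by norm_num : (0:ℝ) ≤ 1/2) (by norm_num : (0:ℝ) ≤ 1/2)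
      (by norm_num : (1:ℝ)/2 + 1/2 = 1)
    simp only [smul_eq_mul, hg0, mul_zero, zero_add] at this
    have hx2 : (1:ℝ)/2 * (2*x) = x := by ring
    rw [hx2] at this
    linarith
  intro s hs hs1
  -- find m with 2^{-(m+1)} < s ≤ 2^{-m}
  have hex : ∃ k : ℕ, (2:ℝ) ^ (-((k:ℤ) + 1)) < s := by
    obtain ⟨k, hk⟩ := exists_pow_lt_of_lt_one hs (by norm_num : (1:ℝ)/2 < 1)
    have e1 : (2:ℝ)^(-((k:ℤ)+1)) < (2:ℝ)^(-(k:ℤ)) :=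
      zpow_lt_zpow_right₀ (by norm_num) (by omega)
    have e2 : (2:ℝ)^(-(k:ℤ)) = ((1:ℝ)/2)^k := by
      rw [zpow_neg, zpow_natCast, one_div, inv_pow]
    exact ⟨k, e1.trans (by rw [e2]; exact hk)⟩
  classical
  set m := Nat.find hex with hmdef
  have hm1 : (2:ℝ) ^ (-((m:ℤ) + 1)) < s := Nat.find_spec hex
  have hm2 : s ≤ (2:ℝ) ^ (-(m:ℤ)) := by
    rcases Nat.eq_zero_or_pos m with h0 | hpos
    · rw [h0]; simpa using hs1
    · have := Nat.find_min hex (Nat.sub_lt hpos one_pos)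
      rw [not_lt] at this
      have : s ≤ (2:ℝ) ^ (-((m - 1 : ℕ) + 1 : ℤ)) := this
      have heq : (-(((m - 1 : ℕ):ℤ) + 1)) = -(m:ℤ) := by omega
      rwa [heq] at this
  -- key arithmetic identities
  have h2pos : ∀ z : ℤ, (0:ℝ) < (2:ℝ)^z := fun z => zpow_pos (by norm_num) z
  have key : ∀ a : ℤ, (2:ℝ) * (2:ℝ)^a = (2:ℝ)^(a+1) := by
    intro a; rw [zpow_add₀ (by norm_num : (2:ℝ) ≠ 0), zpow_one]; ring
  -- step 1: g(2^{1-n} s) ≤ g(2 * 2^{-(m+n)})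
  have harg : (2:ℝ) ^ (1 - (n:ℤ)) * s ≤ 2 * (2:ℝ) ^ (-((m:ℤ) + (n:ℤ))) := by
    have : (2:ℝ) ^ (1 - (n:ℤ)) * (2:ℝ)^(-(m:ℤ)) = 2 * (2:ℝ) ^ (-((m:ℤ) + (n:ℤ))) := by
      rw [← zpow_add₀ (by norm_num : (2:ℝ) ≠ 0), key]
      congr 1; ring
    calc (2:ℝ) ^ (1 - (n:ℤ)) * s ≤ (2:ℝ) ^ (1 - (n:ℤ)) * (2:ℝ)^(-(m:ℤ)) := by
          exact mul_le_mul_of_nonneg_left hm2 (le_of_lt (h2pos _))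
      _ = _ := this
  have step1 : g ((2:ℝ) ^ (1 - (n:ℤ)) * s) ≤ g (2 * (2:ℝ) ^ (-((m:ℤ) + (n:ℤ)))) :=
    hmono (Set.mem_Ici.mpr (by positivity)) (Set.mem_Ici.mpr (by positivity)) harg
  have step2 : g (2 * (2:ℝ) ^ (-((m:ℤ) + (n:ℤ)))) ≤ 2 * g ((2:ℝ) ^ (-((m:ℤ) + (n:ℤ)))) :=
    hdouble _ (le_of_lt (h2pos _))
  have step3 : g ((2:ℝ) ^ (-((m:ℤ) + (n:ℤ)))) ≤ A * g ((2:ℝ) ^ (-(m:ℤ))) := h m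
  -- g(2^{-m}) ≤ 2 g(s)
  have hmid : (2:ℝ)^(-(m:ℤ)) = 2 * (2:ℝ)^(-((m:ℤ)+1)) := by
    rw [key]; congr 1; ring
  have step4 : g ((2:ℝ)^(-(m:ℤ))) ≤ 2 * g s := by
    calc g ((2:ℝ)^(-(m:ℤ))) = g (2 * (2:ℝ)^(-((m:ℤ)+1))) := by rw [hmid]
      _ ≤ 2 * g ((2:ℝ)^(-((m:ℤ)+1))) := hdouble _ (le_of_lt (h2pos _))
      _ ≤ 2 * g s := by
          have := hmono (le_of_lt (h2pos (-((m:ℤ)+1)))) (le_of_lt hs) (le_of_lt hm1)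
          linarith
  calc g ((2:ℝ) ^ (1 - (n:ℤ)) * s) ≤ g (2 * (2:ℝ) ^ (-((m:ℤ) + (n:ℤ)))) := step1
    _ ≤ 2 * g ((2:ℝ) ^ (-((m:ℤ) + (n:ℤ)))) := step2
    _ ≤ 2 * (A * g ((2:ℝ) ^ (-(m:ℤ)))) := by linarith
    _ ≤ 2 * (A * (2 * g s)) := by
        have := mul_le_mul_of_nonneg_left step4 hA
        linarith
    _ = 4 * A * g s := by ring
end

section
/- In the setting of the context, for every real t ≥ 0 with 2^{n−1}·N(t) ≤ 1, we have N(t/(4·A)) ≤ 2^{n−1}·N(t). -/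
open Filter

theorem stmt15 (N : ℝ → ℝ) (g : ℝ → ℝ)
    (hN0 : N 0 = 0) (hNcont : ContinuousOn N (Set.Ici 0))
    (hNmono : StrictMonoOn N (Set.Ici 0)) (hNconv : ConvexOn ℝ (Set.Ici 0) N)
    (hNtop : Tendsto N atTop atTop)
    (hgN : ∀ t : ℝ, 0 ≤ t → g (N t) = t) (hNg : ∀ s : ℝ, 0 ≤ s → N (g s) = s)
    (n : ℕ) (hn : 1 ≤ n) (A : ℝ) (hA : 0 < A)
    (hAn : ∀ m : ℕ, g ((2 : ℝ) ^ (-((m : ℤ) + (n : ℤ)))) ≤ A * g ((2 : ℝ) ^ (-(m : ℤ)))) :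
    ∀ t : ℝ, 0 ≤ t → (2 : ℝ) ^ ((n : ℤ) - 1) * N t ≤ 1 →
      N (t / (4 * A)) ≤ (2 : ℝ) ^ ((n : ℤ) - 1) * N t := by
  -- surjectivity of N on [0, ∞)
  have hsurj : ∀ s : ℝ, 0 ≤ s → ∃ t : ℝ, 0 ≤ t ∧ N t = s := by
    intro s hs
    obtain ⟨t₀, hst₀, ht₀⟩ := ((hNtop.eventually_ge_atTop s).and (eventually_ge_atTop 0)).exists
    have hsub : Set.Icc (0:ℝ) t₀ ⊆ Set.Ici 0 := Set.Icc_subset_Ici_self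
    have := intermediate_value_Icc ht₀ (hNcont.mono hsub)
    have hmem : s ∈ Set.Icc (N 0) (N t₀) := by
      rw [hN0]; exact ⟨hs, hst₀⟩
    obtain ⟨t, htmem, hts⟩ := this hmem
    exact ⟨t, htmem.1, hts⟩
  have hg0 : ∀ s : ℝ, 0 ≤ s → 0 ≤ g s := by
    intro s hs
    obtain ⟨t, ht, hts⟩ := hsurj s hs
    rw [← hts, hgN t ht]; exact ht
  have hgmono : ∀ s₁ s₂ : ℝ, 0 ≤ s₁ → s₁ ≤ s₂ → g s₁ ≤ g s₂ := by
    intro s₁ s₂ h1 h12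
    by_contra h
    push_neg at h
    have := hNmono (Set.mem_Ici.2 (hg0 s₂ (h1.trans h12))) (Set.mem_Ici.2 (hg0 s₁ h1)) h
    rw [hNg s₁ h1, hNg s₂ (h1.trans h12)] at this
    linarith
  have hNdouble : ∀ y : ℝ, 0 ≤ y → 2 * N y ≤ N (2 * y) := by
    intro y hy
    have h := hNconv.2 (Set.mem_Ici.2 (by linarith : (0:ℝ) ≤ 2*y))
      (Set.mem_Ici.2 (le_refl (0:ℝ))) (by norm_num : (0:ℝ) ≤ 1/2)
      (by norm_num : (0:ℝ) ≤ 1/2) (by norm_num)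
    simp only [smul_eq_mul, mul_zero, add_zero] at h
    have hy' : (1/2 : ℝ) * (2 * y) = y := by ring
    rw [hy', hN0] at h
    linarith
  have hgdouble : ∀ x : ℝ, 0 ≤ x → g (2 * x) ≤ 2 * g x := by
    intro x hx
    have h1 : 2 * x ≤ N (2 * g x) := by
      have := hNdouble (g x) (hg0 x hx)
      rwa [hNg x hx] at this
    have h2 := hgmono (2*x) (N (2 * g x)) (by linarith) h1
    rwa [hgN (2 * g x) (by have := hg0 x hx; linarith)] at h2
  intro t ht hu
  rcases eq_or_lt_of_le ht with h0 | h0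
  · rw [← h0]
    simp [hN0]
  · set s := N t with hs
    have hspos : 0 < s := by
      have := hNmono Set.self_mem_Ici (Set.mem_Ici.2 ht) h0
      rwa [hN0] at this
    set u := (2:ℝ)^((n:ℤ)-1) * s with hudef
    have hupos : 0 < u := by positivity
    have hule : u ≤ 1 := hu
    obtain ⟨k, hk⟩ := exists_mem_Ioc_zpow hupos one_lt_two
    have hk1 : (2:ℝ)^k < u := hk.1
    have hk2 : u ≤ (2:ℝ)^(k+1) := hk.2
    have two_ne : (2:ℝ) ≠ 0 := two_ne_zero
    have hkneg : k + 1 ≤ 0 := by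
      by_contra h
      push_neg at h
      have hk0 : (0:ℤ) ≤ k := by omega
      have : (1:ℝ) ≤ (2:ℝ)^k := one_le_zpow₀ (by norm_num) hk0
      linarith
    set m : ℕ := (-(k+1)).toNat with hmdef
    have hm : (m:ℤ) = -(k+1) := Int.toNat_of_nonneg (by omega)
    have hsu : s = (2:ℝ)^(1-(n:ℤ)) * u := by
      rw [hudef, ← mul_assoc, ← zpow_add₀ two_ne]
      norm_num
    have ha : s ≤ 2 * (2:ℝ)^(-((m:ℤ)+(n:ℤ))) := by
      have heq : (2:ℝ) * (2:ℝ)^(-((m:ℤ)+(n:ℤ))) = (2:ℝ)^(1-(n:ℤ)) * (2:ℝ)^(k+1) := by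
        rw [← zpow_one_add₀ two_ne, ← zpow_add₀ two_ne]
        congr 1
        omega
      rw [heq, hsu]
      have hz : (0:ℝ) < (2:ℝ)^(1-(n:ℤ)) := zpow_pos two_pos _
      nlinarith
    have hb : (2:ℝ)^(-(m:ℤ)) ≤ 2 * u := by
      have heq : (2:ℝ)^(-(m:ℤ)) = 2 * (2:ℝ)^k := by
        rw [← zpow_one_add₀ two_ne]
        congr 1
        omega
      rw [heq]; linarith
    have hgs : t = g s := (hgN t ht).symm
    have hp1 : (0:ℝ) < (2:ℝ)^(-((m:ℤ)+(n:ℤ))) := zpow_pos two_pos _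
    have hp2 : (0:ℝ) < (2:ℝ)^(-(m:ℤ)) := zpow_pos two_pos _
    have c1 : g s ≤ g (2 * (2:ℝ)^(-((m:ℤ)+(n:ℤ)))) := hgmono _ _ hspos.le ha
    have c2 : g (2*(2:ℝ)^(-((m:ℤ)+(n:ℤ)))) ≤ 2 * g ((2:ℝ)^(-((m:ℤ)+(n:ℤ)))) :=
      hgdouble _ hp1.le
    have c3 := hAn m
    have c4 : g ((2:ℝ)^(-(m:ℤ))) ≤ g (2*u) := hgmono _ _ hp2.le hb
    have c5 : g (2*u) ≤ 2 * g u := hgdouble u hupos.le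
    have hgu0 : 0 ≤ g u := hg0 u hupos.le
    have hfin : t ≤ 4 * A * g u := by nlinarith
    have hdiv : t / (4*A) ≤ g u := by
      rw [div_le_iff₀ (by linarith)]
      nlinarith
    calc N (t/(4*A)) ≤ N (g u) :=
          hNmono.monotoneOn (Set.mem_Ici.2 (by positivity)) (Set.mem_Ici.2 hgu0) hdiv
      _ = u := hNg u hupos.le
end

section
/- In the setting of the context, let u > 0 and let a : ℕ → ℝ be such that the series Σ_{k=0}^∞ 2^k·N(|a(k)|/u) converges with sum at most 1. Then the series Σ_{k=0}^∞ 2^k·N(|a(k+n)|/(4·A·u)) converges with sum at most 1. (This shows that the backward shift τ_{−n} has norm at most 4·A on the sequence lattice U_N whose unit ball is defined by the modular Σ_k 2^k·N(|a_k|/u) ≤ 1, the lattice representing the Orlicz sequence space l_N via dyadic blocks.) -/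
open Filter

theorem stmt16 (N : ℝ → ℝ) (g : ℝ → ℝ)
    (hN0 : N 0 = 0) (hNcont : ContinuousOn N (Set.Ici 0))
    (hNmono : StrictMonoOn N (Set.Ici 0)) (hNconv : ConvexOn ℝ (Set.Ici 0) N)
    (hNtop : Tendsto N atTop atTop)
    (hgN : ∀ t : ℝ, 0 ≤ t → g (N t) = t) (hNg : ∀ s : ℝ, 0 ≤ s → N (g s) = s)
    (n : ℕ) (hn : 1 ≤ n) (A : ℝ) (hA : 0 < A)
    (hAn : ∀ m : ℕ, g ((2 : ℝ) ^ (-((m : ℤ) + (n : ℤ)))) ≤ A * g ((2 : ℝ) ^ (-(m : ℤ))))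
    (u : ℝ) (hu : 0 < u) (a : ℕ → ℝ)
    (hsum : Summable (fun k : ℕ => (2 : ℝ) ^ k * N (|a k| / u)))
    (hle : ∑' k : ℕ, (2 : ℝ) ^ k * N (|a k| / u) ≤ 1) :
    Summable (fun k : ℕ => (2 : ℝ) ^ k * N (|a (k + n)| / (4 * A * u))) ∧
      ∑' k : ℕ, (2 : ℝ) ^ k * N (|a (k + n)| / (4 * A * u)) ≤ 1 := by
  have hNmonoOn : MonotoneOn N (Set.Ici 0) := hNmono.monotoneOn
  -- N is nonnegative on [0,∞)
  have hNnn : ∀ t : ℝ, 0 ≤ t → 0 ≤ N t := by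
    intro t ht
    have := hNmonoOn (Set.self_mem_Ici) ht ht
    rwa [hN0] at this
  -- g is nonnegative on [0,∞)
  have hgnn : ∀ s : ℝ, 0 ≤ s → 0 ≤ g s := by
    intro s hs
    obtain ⟨T, hT1, hT0⟩ := ((hNtop.eventually_ge_atTop s).and (eventually_ge_atTop (0:ℝ))).exists
    have hsub : Set.Icc (N 0) (N T) ⊆ N '' Set.Icc 0 T :=
      intermediate_value_Icc hT0 (hNcont.mono (Set.Icc_subset_Ici_self))
    have hmem : s ∈ Set.Icc (N 0) (N T) := by rw [hN0]; exact ⟨hs, hT1⟩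
    obtain ⟨t, ht, hts⟩ := hsub hmem
    rw [← hts, hgN t ht.1]
    exact ht.1
  -- g is monotone on [0,∞)
  have hgmono : ∀ s1 s2 : ℝ, 0 ≤ s1 → s1 ≤ s2 → g s1 ≤ g s2 := by
    intro s1 s2 hs1 h12
    by_contra hcon
    push_neg at hcon
    have := hNmono (Set.mem_Ici.2 (hgnn s2 (hs1.trans h12))) (Set.mem_Ici.2 (hgnn s1 hs1)) hcon
    rw [hNg s1 hs1, hNg s2 (hs1.trans h12)] at this
    exact absurd h12 (not_le.2 this)
  -- convexity scaling: N (c * t) ≤ c * N t for c ∈ [0,1], t ≥ 0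
  have hscale : ∀ t : ℝ, 0 ≤ t → ∀ c : ℝ, 0 ≤ c → c ≤ 1 → N (c * t) ≤ c * N t := by
    intro t ht c hc hc1
    have := hNconv.2 (Set.mem_Ici.2 ht) (Set.self_mem_Ici) hc (by linarith : (0:ℝ) ≤ 1 - c)
      (by ring)
    simpa [hN0, smul_eq_mul] using this
  -- dilation estimate for all small s
  have hC : ∀ s : ℝ, 0 < s → s ≤ (2:ℝ) ^ (-(n:ℤ)) → g s ≤ A * g ((2:ℝ) ^ ((n:ℤ)+1) * s) := by
    intro s hs hsn
    have hex : ∃ j : ℕ, (2:ℝ) ^ (-((j:ℤ)+1)) < s := by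
      obtain ⟨j, hj⟩ := exists_pow_lt_of_lt_one hs (by norm_num : (1:ℝ)/2 < 1)
      refine ⟨j, lt_of_le_of_lt ?_ hj⟩
      rw [div_pow, one_pow, zpow_neg, zpow_add₀ (two_ne_zero), zpow_natCast, zpow_one]
      rw [one_div, mul_inv]
      have : (0:ℝ) < (2:ℝ)^j := by positivity
      nlinarith [inv_pos.2 this]
    classical
    set j := Nat.find hex with hjdef
    have hj1 : (2:ℝ) ^ (-((j:ℤ)+1)) < s := Nat.find_spec hex
    have hj2 : s ≤ (2:ℝ) ^ (-(j:ℤ)) := by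
      rcases Nat.eq_zero_or_pos j with h0 | hpos
      · rw [h0]
        simp only [Nat.cast_zero, neg_zero, zpow_zero]
        calc s ≤ (2:ℝ) ^ (-(n:ℤ)) := hsn
          _ ≤ 1 := by
            apply zpow_le_one_of_nonpos₀ (by norm_num : (1:ℝ) ≤ 2)
            omega
      · have := Nat.find_min hex (Nat.sub_lt hpos one_pos)
        push_neg at this
        have hcast : (((j - 1 : ℕ) : ℤ) + 1) = (j : ℤ) := by omega
        rwa [hcast] at this
    -- j ≥ n since s ≤ 2^{-n}
    have hjn : n ≤ j := by
      by_contra hcon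
      push_neg at hcon
      have h1 : (-(n:ℤ)) ≤ -((j:ℤ)+1) := by omega
      have : (2:ℝ) ^ (-(n:ℤ)) ≤ (2:ℝ) ^ (-((j:ℤ)+1)) :=
        zpow_le_zpow_right₀ (by norm_num) h1
      linarith
    -- apply hAn at m = j - n
    have hm := hAn (j - n)
    have hcastm : -(((j - n : ℕ) : ℤ) + (n : ℤ)) = -(j:ℤ) := by omega
    rw [hcastm] at hm
    have hle1 : g s ≤ g ((2:ℝ) ^ (-(j:ℤ))) := hgmono s _ hs.le hj2
    have hle2 : g ((2:ℝ) ^ (-((j - n : ℕ) : ℤ))) ≤ g ((2:ℝ) ^ ((n:ℤ)+1) * s) := by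
      apply hgmono _ _ (by positivity)
      have : (2:ℝ) ^ (-((j - n : ℕ) : ℤ)) = (2:ℝ) ^ ((n:ℤ)+1) * (2:ℝ) ^ (-((j:ℤ)+1)) := by
        rw [← zpow_add₀ (two_ne_zero : (2:ℝ) ≠ 0)]
        congr 1
        omega
      rw [this]
      exact mul_le_mul_of_nonneg_left hj1.le (by positivity)
    calc g s ≤ g ((2:ℝ) ^ (-(j:ℤ))) := hle1
      _ ≤ A * g ((2:ℝ) ^ (-((j - n : ℕ) : ℤ))) := hm
      _ ≤ A * g ((2:ℝ) ^ ((n:ℤ)+1) * s) := by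
          exact mul_le_mul_of_nonneg_left hle2 hA.le
  -- per-term bound from hle
  have hterm : ∀ j : ℕ, N (|a j| / u) ≤ (2:ℝ) ^ (-(j:ℤ)) := by
    intro j
    have hpos : ∀ i : ℕ, 0 ≤ (2:ℝ) ^ i * N (|a i| / u) := by
      intro i
      exact mul_nonneg (by positivity) (hNnn _ (by positivity))
    have h1 : (2:ℝ) ^ j * N (|a j| / u) ≤ 1 :=
      le_trans (Summable.le_tsum hsum j (fun i _ => hpos i)) hle
    have h2 : (0:ℝ) < (2:ℝ) ^ j := by positivity
    rw [zpow_neg, zpow_natCast, ← one_div]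
    rw [le_div_iff₀ h2, mul_comm]
    exact h1
  -- the pointwise main estimate
  have hmain : ∀ k : ℕ, (2:ℝ) ^ k * N (|a (k + n)| / (4 * A * u)) ≤
      (1/2) * ((2:ℝ) ^ (k + n) * N (|a (k + n)| / u)) := by
    intro k
    set t : ℝ := |a (k + n)| / u with htdef
    have ht : 0 ≤ t := by positivity
    have hrw : |a (k + n)| / (4 * A * u) = (1/4) * (t / A) := by
      rw [htdef]
      rw [div_div]
      ring
    rcases eq_or_lt_of_le ht with h0 | htpos
    · have ht0 : t = 0 := h0.symm
      rw [hrw, ht0]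
      simp [hN0, ht0]
    · -- t > 0
      set s : ℝ := N t with hsdef
      have hspos : 0 < s := by
        have := hNmono (Set.self_mem_Ici) (Set.mem_Ici.2 ht) htpos
        rwa [hN0] at this
      have hsle : s ≤ (2:ℝ) ^ (-((k + n : ℕ) : ℤ)) := hterm (k + n)
      have hsle' : s ≤ (2:ℝ) ^ (-(n:ℤ)) := by
        refine hsle.trans (zpow_le_zpow_right₀ (by norm_num) ?_)
        omega
      have hgs : g s = t := hgN t ht
      have hCs := hC s hspos hsle'
      rw [hgs] at hCs
      -- t / A ≤ g (2^(n+1) * s)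
      have htA : t / A ≤ g ((2:ℝ) ^ ((n:ℤ)+1) * s) := by
        rw [div_le_iff₀ hA, mul_comm]
        exact hCs
      have hNtA : N (t / A) ≤ (2:ℝ) ^ ((n:ℤ)+1) * s := by
        have h1 : N (t / A) ≤ N (g ((2:ℝ) ^ ((n:ℤ)+1) * s)) :=
          hNmonoOn (Set.mem_Ici.2 (by positivity)) (Set.mem_Ici.2 (hgnn _ (by positivity))) htA
        rwa [hNg _ (by positivity)] at h1
      have hNquarter : N ((1/4) * (t / A)) ≤ (1/4) * N (t / A) :=
        hscale (t / A) (by positivity) (1/4) (by norm_num) (by norm_num)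
      rw [hrw]
      calc (2:ℝ) ^ k * N ((1/4) * (t / A)) ≤ (2:ℝ) ^ k * ((1/4) * N (t / A)) := by
            apply mul_le_mul_of_nonneg_left hNquarter (by positivity)
        _ ≤ (2:ℝ) ^ k * ((1/4) * ((2:ℝ) ^ ((n:ℤ)+1) * s)) := by
            apply mul_le_mul_of_nonneg_left _ (by positivity)
            apply mul_le_mul_of_nonneg_left hNtA (by norm_num)
        _ = (1/2) * ((2:ℝ) ^ (k + n) * s) := by
            rw [show ((n:ℤ)+1) = ((n+1 : ℕ) : ℤ) by push_cast; ring, zpow_natCast]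
            rw [pow_add, pow_add, pow_succ]
            ring
  -- summability of the comparison function
  have hsum1 : Summable (fun k : ℕ => (2:ℝ) ^ (k + n) * N (|a (k + n)| / u)) :=
    hsum.comp_injective (add_left_injective n)
  have hsum2 : Summable (fun k : ℕ => (1/2) * ((2:ℝ) ^ (k + n) * N (|a (k + n)| / u))) :=
    hsum1.mul_left _
  have hnn : ∀ k : ℕ, 0 ≤ (2:ℝ) ^ k * N (|a (k + n)| / (4 * A * u)) := by
    intro k
    exact mul_nonneg (by positivity) (hNnn _ (by positivity))
  have hsumT : Summable (fun k : ℕ => (2:ℝ) ^ k * N (|a (k + n)| / (4 * A * u))) :=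
    Summable.of_nonneg_of_le hnn hmain hsum2
  refine ⟨hsumT, ?_⟩
  have h1 : ∑' k : ℕ, (2:ℝ) ^ k * N (|a (k + n)| / (4 * A * u)) ≤
      ∑' k : ℕ, (1/2) * ((2:ℝ) ^ (k + n) * N (|a (k + n)| / u)) :=
    Summable.tsum_le_tsum hmain hsumT hsum2
  have h2 : ∑' k : ℕ, (2:ℝ) ^ (k + n) * N (|a (k + n)| / u) ≤
      ∑' k : ℕ, (2:ℝ) ^ k * N (|a k| / u) := by
    apply Summable.tsum_le_tsum_of_inj (fun k => k + n) (add_left_injective n)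
    · intro c _
      exact mul_nonneg (by positivity) (hNnn _ (by positivity))
    · intro i; exact le_refl _
    · exact hsum1
    · exact hsum
  rw [tsum_mul_left] at h1
  calc ∑' k : ℕ, (2:ℝ) ^ k * N (|a (k + n)| / (4 * A * u))
      ≤ (1/2) * ∑' k : ℕ, (2:ℝ) ^ (k + n) * N (|a (k + n)| / u) := h1
    _ ≤ (1/2) * 1 := by
        apply mul_le_mul_of_nonneg_left (h2.trans hle) (by norm_num)
    _ ≤ 1 := by norm_num
end
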